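/- arXiv:2105.06094 — 8 statements merged into one kernel-verified Lean document; each statement's English description precedes it below -/
import Mathlib

section
/- If f : (a,b) → ℝ is λ-convex for some λ ∈ (0,1) (i.e., f(λx + (1-λ)y) ≤ λf(x) + (1-λ)f(y) for all x, y in (a,b)) and f is bounded on some open interval around a point x ∈ (a,b), then f is continuous at x. -/
/-!
Iterating `λ`-convexity gives `λⁿ`-convexity. If `|f| ≤ M` on a ball of radius `ε` about `x` and
`|y - x| < λⁿ ε / 2`, write `y = λⁿ v + (1 - λⁿ) x` and `x = λⁿ u + (1 - λⁿ) y`; the points `u, v`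
lie within `ε / 2` of `x`, so both convexity inequalities give `|f y - f x| ≤ 2 M λⁿ → 0`.
-/

open Set Metric Filter Topology

def LambdaConvexOn (S : Set ℝ) (t : ℝ) (f : ℝ → ℝ) : Prop :=
  ∀ x ∈ S, ∀ y ∈ S, f (t * x + (1 - t) * y) ≤ t * f x + (1 - t) * f y

namespace LambdaConvexOn

variable {S : Set ℝ} {s t M x y ε : ℝ} {f : ℝ → ℝ}

lemma mul (hS : Convex ℝ S) (hs : LambdaConvexOn S s f) (ht : LambdaConvexOn S t f)
    (hs0 : 0 ≤ s) (ht0 : 0 ≤ t) (ht1 : t ≤ 1) : LambdaConvexOn S (s * t) f := by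
  intro x hx y hy
  have hxy : t * x + (1 - t) * y ∈ S := by
    simpa only [smul_eq_mul] using hS hx hy ht0 (by linarith) (by ring)
  calc f (s * t * x + (1 - s * t) * y)
      = f (s * (t * x + (1 - t) * y) + (1 - s) * y) := by ring_nf
    _ ≤ s * f (t * x + (1 - t) * y) + (1 - s) * f y := hs _ hxy y hy
    _ ≤ s * (t * f x + (1 - t) * f y) + (1 - s) * f y := by gcongr; exact ht x hx y hy
    _ = s * t * f x + (1 - s * t) * f y := by ring

lemma pow (hS : Convex ℝ S) (ht : LambdaConvexOn S t f) (ht0 : 0 ≤ t) (ht1 : t ≤ 1) (n : ℕ) :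
    LambdaConvexOn S (t ^ n) f := by
  induction n with
  | zero => intro x _ y _; simp
  | succ n ih => rw [pow_succ]; exact ih.mul hS ht (pow_nonneg ht0 n) ht0 ht1

lemma sub_le_of_abs_le (ht : LambdaConvexOn S t f) (ht0 : 0 ≤ t) (hM : ∀ z ∈ S, |f z| ≤ M)
    (hx : x ∈ S) (hy : y ∈ S) : f (t * x + (1 - t) * y) - f y ≤ 2 * M * t := by
  have hfx := abs_le.mp (hM x hx)
  have hfy := abs_le.mp (hM y hy)
  have : t * (f x - f y) ≤ t * (2 * M) := by gcongr; linarith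
  linarith [ht x hx y hy]

lemma abs_sub_le_of_abs_le (ht : LambdaConvexOn (ball x ε) t f) (ht0 : 0 < t) (ht1 : t ≤ 1)
    (hM : ∀ z ∈ ball x ε, |f z| ≤ M) (hy : |y - x| < t * ε / 2) :
    |f y - f x| ≤ 2 * M * t := by
  have hε : 0 < ε := by nlinarith [abs_nonneg (y - x)]
  have hd : |(y - x) / t| < ε / 2 := by
    rw [abs_div, abs_of_pos ht0, div_lt_iff₀ ht0]; linarith
  have hd' : |(1 - t) * ((y - x) / t)| < ε / 2 := by
    rw [abs_mul, abs_of_nonneg (by linarith : 0 ≤ 1 - t)]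
    nlinarith [abs_nonneg ((y - x) / t)]
  have hx : x ∈ ball x ε := mem_ball_self hε
  have hyb : y ∈ ball x ε := by rw [mem_ball, Real.dist_eq]; nlinarith
  have hv : x + (y - x) / t ∈ ball x ε := by
    rw [mem_ball, Real.dist_eq, add_sub_cancel_left]; linarith
  have hu : x - (1 - t) * ((y - x) / t) ∈ ball x ε := by
    rw [mem_ball, Real.dist_eq, sub_sub_cancel_left, abs_neg]; linarith
  have hup := ht.sub_le_of_abs_le ht0.le hM hv hx
  have hlow := ht.sub_le_of_abs_le ht0.le hM hu hyb
  rw [show t * (x + (y - x) / t) + (1 - t) * x = y by field_simp; ring] at hup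
  rw [show t * (x - (1 - t) * ((y - x) / t)) + (1 - t) * y = x by field_simp; ring] at hlow
  exact abs_le.mpr ⟨by linarith, hup⟩

lemma continuousAt_of_abs_le (ht : LambdaConvexOn (ball x ε) t f) (ht0 : 0 < t) (ht1 : t < 1)
    (hM : ∀ z ∈ ball x ε, |f z| ≤ M) (hε : 0 < ε) : ContinuousAt f x := by
  rw [Metric.continuousAt_iff]
  intro e he
  have hlim : Tendsto (fun n : ℕ ↦ 2 * M * t ^ n) atTop (𝓝 0) := by
    simpa using (tendsto_pow_atTop_nhds_zero_of_lt_one ht0.le ht1).const_mul (2 * M)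
  obtain ⟨n, hn⟩ := (hlim.eventually (gt_mem_nhds he)).exists
  refine ⟨t ^ n * ε / 2, by positivity, fun y hy ↦ ?_⟩
  rw [Real.dist_eq] at hy ⊢
  exact ((ht.pow (convex_ball x ε) ht0.le ht1.le n).abs_sub_le_of_abs_le (pow_pos ht0 n)
    (pow_le_one₀ ht0.le ht1.le) hM hy).trans_lt hn

end LambdaConvexOn

theorem lambda_convex_bounded_implies_continuousAt_general
    (lam : ℝ) (hlam0 : 0 < lam) (hlam1 : lam < 1)
    (f : ℝ → ℝ) (D : Set ℝ)
    (hconv : ∀ x ∈ D, ∀ y ∈ D,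
      f (lam * x + (1 - lam) * y) ≤ lam * f x + (1 - lam) * f y)
    (x : ℝ)
    (hbd : ∃ ε > 0, ∃ M : ℝ, Ioo (x - ε) (x + ε) ⊆ D ∧
      ∀ y ∈ Ioo (x - ε) (x + ε), |f y| ≤ M) :
    ContinuousAt f x := by
  obtain ⟨ε, hε, M, hsub, hM⟩ := hbd
  rw [← Real.ball_eq_Ioo] at hsub hM
  exact LambdaConvexOn.continuousAt_of_abs_le
    (fun p hp q hq ↦ hconv p (hsub hp) q (hsub hq)) hlam0 hlam1 hM hε

/-- A `λ`-convex function on an interval `(a,b)` (endpoints possibly infinite)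
that is bounded on an open interval around a point `x ∈ (a,b)` is continuous at `x`. -/
theorem lambda_convex_bounded_implies_continuousAt
    (a b : EReal) (hab : a < b) (lam : ℝ) (hlam0 : 0 < lam) (hlam1 : lam < 1)
    (f : ℝ → ℝ) (D : Set ℝ) (hD : D = {x : ℝ | a < (x : EReal) ∧ (x : EReal) < b})
    (hconv : ∀ x ∈ D, ∀ y ∈ D,
      f (lam * x + (1 - lam) * y) ≤ lam * f x + (1 - lam) * f y)
    (x : ℝ) (hx : x ∈ D)
    (hbd : ∃ ε > 0, ∃ M : ℝ, Ioo (x - ε) (x + ε) ⊆ D ∧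
      ∀ y ∈ Ioo (x - ε) (x + ε), |f y| ≤ M) :
    ContinuousAt f x :=
  lambda_convex_bounded_implies_continuousAt_general lam hlam0 hlam1 f D hconv x hbd
end

section
/- If f : (a,b) → ℝ is λ-convex for some λ ∈ (0,1) and f is bounded on an open interval around every point of (a,b), then f is convex on (a,b). -/
open Set Filter Topology

/-!
The weights `t ∈ [0, 1]` for which `f` is `t`-convex form a set that contains `0`, `1` and `λ` and
is closed under `(r, s, t) ↦ r s + (1 - r) t`; splitting `[0, 1]` at `λ` and rescaling shows that
it is dense in `[0, 1]`. To prove `f z ≤ p f x + (1 - p) f y` for `z = p x + (1 - p) y`, pick a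
weight `ν < 1` and write `z = ν A + (1 - ν) w` with `A = μ x + (1 - μ) y` for a weight `μ`. As
`μ → p` we get `A → z` and `w → z`, so the local bound `f w ≤ M` gives
`f z ≤ ν (p f x + (1 - p) f y) + (1 - ν) M`, and `ν → 1` finishes.
-/

def convexWeights (D : Set ℝ) (f : ℝ → ℝ) : Set ℝ :=
  {t ∈ Icc 0 1 | ∀ x ∈ D, ∀ y ∈ D, f (t * x + (1 - t) * y) ≤ t * f x + (1 - t) * f y}

lemma Convex.mul_add_one_sub_mul_mem {D : Set ℝ} (hD : Convex ℝ D) {t x y : ℝ}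
    (ht : t ∈ Icc (0 : ℝ) 1) (hx : x ∈ D) (hy : y ∈ D) : t * x + (1 - t) * y ∈ D :=
  hD hx hy ht.1 (by linarith [ht.2]) (by ring)

lemma exists_mem_abs_sub_le_pow {S : Set ℝ} {lam : ℝ} (hlam0 : 0 < lam) (hlam1 : lam < 1)
    (h0 : (0 : ℝ) ∈ S) (h1 : (1 : ℝ) ∈ S)
    (hcomb : ∀ s ∈ S, ∀ t ∈ S, lam * s + (1 - lam) * t ∈ S) (n : ℕ) :
    ∀ t ∈ Icc (0 : ℝ) 1, ∃ u ∈ S, |u - t| ≤ max lam (1 - lam) ^ n := by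
  have hm : 0 ≤ max lam (1 - lam) := le_max_of_le_left hlam0.le
  induction n with
  | zero =>
    rintro t ⟨ht0, ht1⟩
    exact ⟨0, h0, by rw [pow_zero, zero_sub, abs_neg, abs_of_nonneg ht0]; exact ht1⟩
  | succ n ih =>
    rintro t ⟨ht0, ht1⟩
    have h1lam : 0 < 1 - lam := by linarith
    rcases le_or_gt t lam with htlam | htlam
    · obtain ⟨u, hu, hut⟩ := ih (t / lam) ⟨by positivity, (div_le_one hlam0).2 htlam⟩
      refine ⟨lam * u + (1 - lam) * 0, hcomb u hu 0 h0, ?_⟩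
      calc |lam * u + (1 - lam) * 0 - t| = lam * |u - t / lam| := by
            rw [← abs_of_pos hlam0, ← abs_mul, abs_of_pos hlam0]; congr 1; field_simp; ring
        _ ≤ max lam (1 - lam) * max lam (1 - lam) ^ n := by gcongr; exact le_max_left _ _
        _ = max lam (1 - lam) ^ (n + 1) := by ring
    · obtain ⟨u, hu, hut⟩ := ih ((t - lam) / (1 - lam))
        ⟨div_nonneg (by linarith) h1lam.le, (div_le_one h1lam).2 (by linarith)⟩
      refine ⟨lam * 1 + (1 - lam) * u, hcomb 1 h1 u hu, ?_⟩
      calc |lam * 1 + (1 - lam) * u - t| = (1 - lam) * |u - (t - lam) / (1 - lam)| := by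
            rw [← abs_of_pos h1lam, ← abs_mul, abs_of_pos h1lam]; congr 1; field_simp; ring
        _ ≤ max lam (1 - lam) * max lam (1 - lam) ^ n := by gcongr; exact le_max_right _ _
        _ = max lam (1 - lam) ^ (n + 1) := by ring

lemma Icc_subset_closure_of_mul_add_one_sub_mul_mem {S : Set ℝ} {lam : ℝ} (hlam0 : 0 < lam)
    (hlam1 : lam < 1) (h0 : (0 : ℝ) ∈ S) (h1 : (1 : ℝ) ∈ S)
    (hcomb : ∀ s ∈ S, ∀ t ∈ S, lam * s + (1 - lam) * t ∈ S) : Icc 0 1 ⊆ closure S := by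
  intro t ht
  refine Metric.mem_closure_iff.2 fun ε hε => ?_
  obtain ⟨n, hn⟩ := exists_pow_lt_of_lt_one hε (max_lt hlam1 (by linarith : 1 - lam < 1))
  obtain ⟨u, hu, hut⟩ := exists_mem_abs_sub_le_pow hlam0 hlam1 h0 h1 hcomb n t ht
  exact ⟨u, hu, by rw [Real.dist_eq, abs_sub_comm]; exact hut.trans_lt hn⟩

lemma Icc_subset_closure_inter_Ioo {S : Set ℝ} {a b : ℝ} (hab : a < b)
    (h : Icc a b ⊆ closure S) : Icc a b ⊆ closure (S ∩ Ioo a b) := by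
  calc Icc a b = closure (Ioo a b) := (closure_Ioo hab.ne).symm
    _ ⊆ closure (Ioo a b ∩ closure S) := closure_mono fun t ht => ⟨ht, h (Ioo_subset_Icc_self ht)⟩
    _ ⊆ closure (closure (Ioo a b ∩ S)) := closure_mono isOpen_Ioo.inter_closure
    _ = closure (S ∩ Ioo a b) := by rw [closure_closure, inter_comm]

section convexWeights

variable {D : Set ℝ} {f : ℝ → ℝ}

lemma zero_mem_convexWeights : (0 : ℝ) ∈ convexWeights D f :=
  ⟨left_mem_Icc.2 zero_le_one, fun x _ y _ => by simp⟩

lemma one_mem_convexWeights : (1 : ℝ) ∈ convexWeights D f :=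
  ⟨right_mem_Icc.2 zero_le_one, fun x _ y _ => by simp⟩

lemma mul_add_one_sub_mul_mem_convexWeights (hD : Convex ℝ D) {r s t : ℝ}
    (hr : r ∈ convexWeights D f) (hs : s ∈ convexWeights D f) (ht : t ∈ convexWeights D f) :
    r * s + (1 - r) * t ∈ convexWeights D f := by
  obtain ⟨⟨hr0, hr1⟩, hr⟩ := hr
  obtain ⟨hsI, hs⟩ := hs
  obtain ⟨htI, ht⟩ := ht
  refine ⟨⟨by nlinarith [hsI.1, htI.1], by nlinarith [hsI.2, htI.2]⟩, fun x hx y hy => ?_⟩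
  have h1r : 0 ≤ 1 - r := by linarith
  calc f ((r * s + (1 - r) * t) * x + (1 - (r * s + (1 - r) * t)) * y)
      = f (r * (s * x + (1 - s) * y) + (1 - r) * (t * x + (1 - t) * y)) := by congr 1; ring
    _ ≤ r * f (s * x + (1 - s) * y) + (1 - r) * f (t * x + (1 - t) * y) :=
      hr _ (hD.mul_add_one_sub_mul_mem hsI hx hy) _ (hD.mul_add_one_sub_mul_mem htI hx hy)
    _ ≤ r * (s * f x + (1 - s) * f y) + (1 - r) * (t * f x + (1 - t) * f y) := by
      gcongr
      exacts [hs x hx y hy, ht x hx y hy]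
    _ = (r * s + (1 - r) * t) * f x + (1 - (r * s + (1 - r) * t)) * f y := by ring

lemma eventually_le_of_mem_convexWeights {ν z M : ℝ} (hν : ν ∈ convexWeights D f) (hν1 : ν < 1)
    (hM : ∀ᶠ y in 𝓝 z, y ∈ D ∧ f y ≤ M) :
    ∀ᶠ A in 𝓝 z, A ∈ D → f z ≤ ν * f A + (1 - ν) * M := by
  have h1ν : 0 < 1 - ν := by linarith
  set w : ℝ → ℝ := fun A => (z - ν * A) / (1 - ν)
  have hw : Tendsto w (𝓝 z) (𝓝 z) := by
    have hwz : w z = z := by simp only [w]; field_simp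
    simpa only [hwz] using ((by fun_prop : Continuous w).tendsto z)
  filter_upwards [hw.eventually hM] with A ⟨hwD, hwM⟩ hA
  have hz : ν * A + (1 - ν) * w A = z := by simp only [w]; field_simp; ring
  calc f z = f (ν * A + (1 - ν) * w A) := by rw [hz]
    _ ≤ ν * f A + (1 - ν) * f (w A) := hν.2 A hA _ hwD
    _ ≤ ν * f A + (1 - ν) * M := by gcongr

lemma le_of_mem_closure_convexWeights (hD : Convex ℝ D) {x y p ν M : ℝ} (hx : x ∈ D)
    (hy : y ∈ D) (hp : p ∈ closure (convexWeights D f)) (hν : ν ∈ convexWeights D f)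
    (hν1 : ν < 1) (hM : ∀ᶠ u in 𝓝 (p * x + (1 - p) * y), u ∈ D ∧ f u ≤ M) :
    f (p * x + (1 - p) * y) ≤ ν * (p * f x + (1 - p) * f y) + (1 - ν) * M := by
  have : NeBot (𝓝[convexWeights D f] p) := mem_closure_iff_nhdsWithin_neBot.1 hp
  have hA : Tendsto (fun μ => μ * x + (1 - μ) * y) (𝓝[convexWeights D f] p)
      (𝓝 (p * x + (1 - p) * y)) :=
    ((by fun_prop : Continuous fun μ : ℝ => μ * x + (1 - μ) * y).tendsto p).mono_left
      nhdsWithin_le_nhds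
  have hbound : Tendsto (fun μ => ν * (μ * f x + (1 - μ) * f y) + (1 - ν) * M)
      (𝓝[convexWeights D f] p) (𝓝 (ν * (p * f x + (1 - p) * f y) + (1 - ν) * M)) :=
    ((by fun_prop : Continuous fun μ : ℝ =>
      ν * (μ * f x + (1 - μ) * f y) + (1 - ν) * M).tendsto p).mono_left nhdsWithin_le_nhds
  refine ge_of_tendsto hbound ?_
  filter_upwards [hA.eventually (eventually_le_of_mem_convexWeights hν hν1 hM),
    self_mem_nhdsWithin] with μ hμz hμ
  calc f (p * x + (1 - p) * y) ≤ ν * f (μ * x + (1 - μ) * y) + (1 - ν) * M :=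
        hμz (hD.mul_add_one_sub_mul_mem hμ.1 hx hy)
    _ ≤ ν * (μ * f x + (1 - μ) * f y) + (1 - ν) * M := by
        gcongr
        · exact hν.1.1
        · exact hμ.2 x hx y hy

theorem convexOn_of_Icc_subset_closure_convexWeights (hD : Convex ℝ D)
    (hdense : Icc 0 1 ⊆ closure (convexWeights D f ∩ Ioo 0 1))
    (hbdd : ∀ z ∈ D, ∃ M, ∀ᶠ y in 𝓝 z, y ∈ D ∧ f y ≤ M) : ConvexOn ℝ D f := by
  refine ⟨hD, fun x hx y hy p q hp hq hpq => ?_⟩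
  obtain rfl : q = 1 - p := by linarith
  simp only [smul_eq_mul]
  have hpI : p ∈ Icc (0 : ℝ) 1 := ⟨hp, by linarith⟩
  obtain ⟨M, hM⟩ := hbdd _ (hD.mul_add_one_sub_mul_mem hpI hx hy)
  have : NeBot (𝓝[convexWeights D f ∩ Ioo 0 1] 1) :=
    mem_closure_iff_nhdsWithin_neBot.1 (hdense (right_mem_Icc.2 zero_le_one))
  have hlim : Tendsto (fun ν => ν * (p * f x + (1 - p) * f y) + (1 - ν) * M)
      (𝓝[convexWeights D f ∩ Ioo 0 1] 1) (𝓝 (p * f x + (1 - p) * f y)) := by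
    simpa using ((by fun_prop : Continuous fun ν : ℝ =>
      ν * (p * f x + (1 - p) * f y) + (1 - ν) * M).tendsto 1).mono_left nhdsWithin_le_nhds
  refine ge_of_tendsto hlim (eventually_nhdsWithin_of_forall fun ν ⟨hν, _, hν1⟩ => ?_)
  exact le_of_mem_closure_convexWeights hD hx hy
    (closure_mono inter_subset_left (hdense hpI)) hν hν1 hM

end convexWeights

theorem lambda_convex_locally_bounded_implies_convex_general
    (a b : EReal) (lam : ℝ) (hlam0 : 0 < lam) (hlam1 : lam < 1)
    (f : ℝ → ℝ) (D : Set ℝ) (hD : D = {x : ℝ | a < (x : EReal) ∧ (x : EReal) < b})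
    (hconv : ∀ x ∈ D, ∀ y ∈ D,
      f (lam * x + (1 - lam) * y) ≤ lam * f x + (1 - lam) * f y)
    (hbd : ∀ x ∈ D, ∃ ε > 0, ∃ M : ℝ, ∀ y ∈ Ioo (x - ε) (x + ε) ∩ D, |f y| ≤ M) :
    ConvexOn ℝ D f := by
  have hDpre : D = Real.toEReal ⁻¹' Ioo a b := hD
  have hDconv : Convex ℝ D := by
    rw [hDpre, convex_iff_ordConnected]
    exact ordConnected_Ioo.preimage_mono EReal.coe_strictMono.monotone
  have hDopen : IsOpen D := hDpre ▸ isOpen_Ioo.preimage continuous_coe_real_ereal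
  have hlam : lam ∈ convexWeights D f := ⟨⟨hlam0.le, hlam1.le⟩, hconv⟩
  have hcomb : ∀ s ∈ convexWeights D f, ∀ t ∈ convexWeights D f,
      lam * s + (1 - lam) * t ∈ convexWeights D f := fun s hs t ht =>
    mul_add_one_sub_mul_mem_convexWeights hDconv hlam hs ht
  refine convexOn_of_Icc_subset_closure_convexWeights hDconv
    (Icc_subset_closure_inter_Ioo zero_lt_one <| Icc_subset_closure_of_mul_add_one_sub_mul_mem
      hlam0 hlam1 zero_mem_convexWeights one_mem_convexWeights hcomb) fun z hz => ?_
  obtain ⟨ε, hε, M, hM⟩ := hbd z hz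
  refine ⟨M, ?_⟩
  filter_upwards [Ioo_mem_nhds (by linarith : z - ε < z) (by linarith : z < z + ε),
    hDopen.mem_nhds hz] with y hyε hyD
  exact ⟨hyD, (abs_le.1 (hM y ⟨hyε, hyD⟩)).2⟩

/-- A `λ`-convex function on an interval `(a,b)` that is locally bounded around
every point of `(a,b)` is convex on `(a,b)`. -/
theorem lambda_convex_locally_bounded_implies_convex
    (a b : EReal) (hab : a < b) (lam : ℝ) (hlam0 : 0 < lam) (hlam1 : lam < 1)
    (f : ℝ → ℝ) (D : Set ℝ) (hD : D = {x : ℝ | a < (x : EReal) ∧ (x : EReal) < b})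
    (hconv : ∀ x ∈ D, ∀ y ∈ D,
      f (lam * x + (1 - lam) * y) ≤ lam * f x + (1 - lam) * f y)
    (hbd : ∀ x ∈ D, ∃ ε > 0, ∃ M : ℝ, ∀ y ∈ Ioo (x - ε) (x + ε) ∩ D, |f y| ≤ M) :
    ConvexOn ℝ D f :=
  lambda_convex_locally_bounded_implies_convex_general a b lam hlam0 hlam1 f D hD hconv hbd
end

section
/- Fix α > 0. Let φ : [0,∞) → [-∞,∞] be such that ψ(x) := φ(e^x), defined on [-∞,∞) (with e^{-∞} := 0), is convex and strictly increasing, and ψ maps ℝ into ℝ. Then for any two probability densities f, g (nonnegative, integrating to 1) with ∫ f^{1+α} dμ and ∫ g^{1+α} dμ finite, the quantity FDPD_{φ,α}(g,f) := φ(∫ f^{α+1}) − (1 + 1/α) φ(∫ f^α g) + (1/α) φ(∫ g^{α+1}) is nonnegative. -/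
open MeasureTheory ENNReal Set

/-- A probability density in `L_{μ,α}`: nonnegative (being `ℝ≥0∞`-valued), measurable,
integrating to `1`, with finite `(1+α)`-th power integral. -/
def IsDensity (μ : Measure ℝ) (α : ℝ) (f : ℝ → ℝ≥0∞) : Prop :=
  Measurable f ∧ ∫⁻ x, f x ∂μ = 1 ∧ ∫⁻ x, f x ^ (1 + α) ∂μ < ⊤

/-- The functional density power divergence
`FDPD_{φ,α}(g,f) = φ(∫ f^{α+1}) − (1+1/α) φ(∫ f^α g) + (1/α) φ(∫ g^{α+1})`. -/
noncomputable def FDPD (φ : ℝ≥0∞ → EReal) (α : ℝ) (μ : Measure ℝ)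
    (g f : ℝ → ℝ≥0∞) : EReal :=
  φ (∫⁻ x, f x ^ (α + 1) ∂μ)
    - ((1 + 1 / α : ℝ) : EReal) * φ (∫⁻ x, f x ^ α * g x ∂μ)
    + ((1 / α : ℝ) : EReal) * φ (∫⁻ x, g x ^ (α + 1) ∂μ)

/-- `ψ` is convex on `[-∞,∞)` (in the extended-real sense). -/
def ERealConvexOn (ψ : EReal → EReal) : Prop :=
  ∀ x : EReal, x < ⊤ → ∀ y : EReal, y < ⊤ → ∀ t : ℝ, 0 < t → t < 1 →
    ψ ((t : EReal) * x + ((1 - t : ℝ) : EReal) * y) ≤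
      (t : EReal) * ψ x + ((1 - t : ℝ) : EReal) * ψ y

/-- `FDPD_{φ,α}` is a valid divergence on densities in `L_{μ,α}`: it is nonnegative, and
vanishes exactly when the two densities agree `μ`-a.e. -/
def IsValidDivergence (φ : ℝ≥0∞ → EReal) (α : ℝ) (μ : Measure ℝ) : Prop :=
  ∀ f g : ℝ → ℝ≥0∞, IsDensity μ α f → IsDensity μ α g →
    0 ≤ FDPD φ α μ g f ∧ (FDPD φ α μ g f = 0 ↔ f =ᵐ[μ] g)


/-!
Write `A = ∫ f^{α+1}`, `B = ∫ f^α g`, `C = ∫ g^{α+1}`. Hölder's inequality with exponents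
`(α+1)/α` and `α+1` gives `B ≤ A^{α/(α+1)} C^{1/(α+1)}`. Taking logarithms and applying
`ψ = φ ∘ exp`, which is increasing and convex, yields
`φ(B) ≤ α/(α+1) · φ(A) + 1/(α+1) · φ(C)`; multiplied by `1 + 1/α = (α+1)/α` this is exactly
`FDPD_{φ,α}(g,f) ≥ 0`. Positivity and finiteness of `A` and `C` make `φ(A)`, `φ(C)` real.
-/

section

variable {X : Type*} [MeasurableSpace X] {μ : Measure X}

theorem lintegral_rpow_ne_zero {p : ℝ} (hp : 0 ≤ p) {f : X → ℝ≥0∞} (hf : AEMeasurable f μ)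
    (h : ∫⁻ x, f x ∂μ ≠ 0) : ∫⁻ x, f x ^ p ∂μ ≠ 0 := fun h0 =>
  h (by simp [lintegral_congr_ae (ae_eq_zero_of_lintegral_rpow_eq_zero hp hf h0)])

theorem lintegral_rpow_mul_le {α : ℝ} (hα : 0 < α) {f g : X → ℝ≥0∞} (hf : AEMeasurable f μ)
    (hg : AEMeasurable g μ) :
    ∫⁻ x, f x ^ α * g x ∂μ ≤
      (∫⁻ x, f x ^ (α + 1) ∂μ) ^ (α / (α + 1)) * (∫⁻ x, g x ^ (α + 1) ∂μ) ^ (1 / (α + 1)) := by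
  have hpq : ((α + 1) / α).HolderConjugate (α + 1) := by
    rw [Real.holderConjugate_iff]
    constructor
    · rw [lt_div_iff₀ hα]; linarith
    · field_simp
  have hpow : ∀ x, (f x ^ α) ^ ((α + 1) / α) = f x ^ (α + 1) := fun x => by
    rw [← ENNReal.rpow_mul, mul_div_cancel₀ _ hα.ne']
  have H := ENNReal.lintegral_mul_le_Lp_mul_Lq μ hpq (hf.pow_const α) hg
  simpa only [Pi.mul_apply, hpow, one_div_div] using H

end

theorem ERealConvexOn.le_of_le_rpow_mul_rpow {φ : ℝ≥0∞ → EReal}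
    (hconv : ERealConvexOn (fun x => φ (EReal.exp x)))
    (hmono : MonotoneOn (fun x => φ (EReal.exp x)) (Iio ⊤)) {a b c : ℝ≥0∞} (ha : a ≠ ⊤)
    (hc : c ≠ ⊤) {t : ℝ} (ht₀ : 0 < t) (ht₁ : t < 1) (hb : b ≤ a ^ t * c ^ (1 - t)) :
    φ b ≤ (t : EReal) * φ a + ((1 - t : ℝ) : EReal) * φ c := by
  have hbound : a ^ t * c ^ (1 - t) < ⊤ :=
    ENNReal.mul_lt_top (ENNReal.rpow_lt_top_of_nonneg ht₀.le ha)
      (ENNReal.rpow_lt_top_of_nonneg (by linarith) hc)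
  have hlog : ENNReal.log (a ^ t * c ^ (1 - t)) =
      (t : EReal) * ENNReal.log a + ((1 - t : ℝ) : EReal) * ENNReal.log c := by
    rw [ENNReal.log_mul_add, ENNReal.log_rpow, ENNReal.log_rpow]
  calc φ b = φ (EReal.exp (ENNReal.log b)) := by rw [ENNReal.exp_log]
    _ ≤ φ (EReal.exp ((t : EReal) * ENNReal.log a + ((1 - t : ℝ) : EReal) * ENNReal.log c)) := by
      rw [← hlog]
      exact hmono (ENNReal.log_lt_top_iff.2 (hb.trans_lt hbound))
        (ENNReal.log_lt_top_iff.2 hbound) (ENNReal.log_monotone hb)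
    _ ≤ (t : EReal) * φ (EReal.exp (ENNReal.log a)) +
        ((1 - t : ℝ) : EReal) * φ (EReal.exp (ENNReal.log c)) :=
      hconv _ (ENNReal.log_lt_top_iff.2 ha.lt_top) _ (ENNReal.log_lt_top_iff.2 hc.lt_top) t ht₀ ht₁
    _ = (t : EReal) * φ a + ((1 - t : ℝ) : EReal) * φ c := by simp only [ENNReal.exp_log]

theorem EReal.zero_le_sub_mul_add_mul {α x z : ℝ} (hα : 0 < α) {y : EReal}
    (hy : y ≤ ((α / (α + 1) : ℝ) : EReal) * x + ((1 - α / (α + 1) : ℝ) : EReal) * z) :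
    0 ≤ (x : EReal) - ((1 + 1 / α : ℝ) : EReal) * y + ((1 / α : ℝ) : EReal) * z := by
  induction y using EReal.rec with
  | bot =>
    rw [EReal.coe_mul_bot_of_pos (by positivity), EReal.sub_bot (EReal.coe_ne_bot x),
      EReal.top_add_of_ne_bot (by simp [← EReal.coe_mul])]
    exact le_top
  | top =>
    rw [← EReal.coe_mul, ← EReal.coe_mul, ← EReal.coe_add] at hy
    exact absurd hy (EReal.coe_lt_top _).not_ge
  | coe y =>
    have hy' : y ≤ α / (α + 1) * x + (1 - α / (α + 1)) * z := by exact_mod_cast hy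
    have key : 0 ≤ x - (1 + 1 / α) * y + 1 / α * z := by
      have hα₁ : α + 1 ≠ 0 := by positivity
      have hscale : (1 + 1 / α) * (α / (α + 1) * x + (1 - α / (α + 1)) * z) = x + 1 / α * z := by
        field_simp; ring
      linarith [mul_le_mul_of_nonneg_left hy' (by positivity : (0 : ℝ) ≤ 1 + 1 / α)]
    exact_mod_cast key

theorem exists_coe_eq_of_ne_zero_of_ne_top {φ : ℝ≥0∞ → EReal}
    (hreal : ∀ x : ℝ, φ (EReal.exp (x : EReal)) ≠ ⊤ ∧ φ (EReal.exp (x : EReal)) ≠ ⊥)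
    {a : ℝ≥0∞} (ha₀ : a ≠ 0) (ha : a ≠ ⊤) : ∃ r : ℝ, φ a = r := by
  obtain ⟨hne_top, hne_bot⟩ := hreal (Real.log a.toReal)
  rw [← ENNReal.log_pos_real ha₀ ha, ENNReal.exp_log] at hne_top hne_bot
  exact ⟨_, (EReal.coe_toReal hne_top hne_bot).symm⟩

/-- if `ψ(x) = φ(eˣ)` is convex and strictly increasing on `[-∞,∞)`
(with `e^{-∞} = 0`) and real-valued on `ℝ`, then `FDPD_{φ,α}(g,f) ≥ 0` for all densities
`f, g ∈ L_{μ,α}` and every `α > 0`. -/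
theorem fdpd_nonneg_of_psi_convex_strictMono
    (μ : Measure ℝ) (α : ℝ) (hα : 0 < α) (φ : ℝ≥0∞ → EReal)
    (hconv : ERealConvexOn (fun x => φ (EReal.exp x)))
    (hmono : StrictMonoOn (fun x => φ (EReal.exp x)) (Iio (⊤ : EReal)))
    (hreal : ∀ x : ℝ, φ (EReal.exp (x : EReal)) ≠ ⊤ ∧ φ (EReal.exp (x : EReal)) ≠ ⊥)
    (f g : ℝ → ℝ≥0∞) (hf : IsDensity μ α f) (hg : IsDensity μ α g) :
    0 ≤ FDPD φ α μ g f := by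
  obtain ⟨hfm, hf₁, hf_fin⟩ := hf
  obtain ⟨hgm, hg₁, hg_fin⟩ := hg
  have hα₁ : (0 : ℝ) < α + 1 := by linarith
  have hA : ∫⁻ x, f x ^ (α + 1) ∂μ ≠ ⊤ := by rw [add_comm]; exact hf_fin.ne
  have hC : ∫⁻ x, g x ^ (α + 1) ∂μ ≠ ⊤ := by rw [add_comm]; exact hg_fin.ne
  have holder := lintegral_rpow_mul_le (μ := μ) hα hfm.aemeasurable hgm.aemeasurable
  rw [show 1 / (α + 1) = 1 - α / (α + 1) by field_simp; ring] at holder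
  have hB := hconv.le_of_le_rpow_mul_rpow hmono.monotoneOn hA hC (div_pos hα hα₁)
    ((div_lt_one hα₁).2 (by linarith)) holder
  obtain ⟨x, hx⟩ := exists_coe_eq_of_ne_zero_of_ne_top hreal
    (lintegral_rpow_ne_zero hα₁.le hfm.aemeasurable (by simp [hf₁])) hA
  obtain ⟨z, hz⟩ := exists_coe_eq_of_ne_zero_of_ne_top hreal
    (lintegral_rpow_ne_zero hα₁.le hgm.aemeasurable (by simp [hg₁])) hC
  rw [hx, hz] at hB
  rw [FDPD, hx, hz]
  exact EReal.zero_le_sub_mul_add_mul hα hB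
end

section
/- Fix α > 0. Let φ : [0,∞) → [-∞,∞] be such that FDPD_{φ,α} is a valid divergence on Lebesgue densities in L_{μ,α} (nonnegative, with equality to zero iff the densities agree a.e.). Then the function ψ(x) := φ(e^x) is strictly increasing on [-∞, ∞), where e^{-∞} := 0. -/
open MeasureTheory ENNReal Set

/-!
Test `FDPD` on uniform densities. A uniform density `f` on an interval of length `θ` has
`∫ f^{α+1} = θ^{-α}`, which sweeps out `(0, ∞)`. Comparing it with a disjoint translate, the cross
term `∫ f^α g` vanishes and positivity of the divergence forces `φ 0 < φ (θ^{-α})`. Comparing the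
uniform densities on `(0, η)` and `(0, θ)` with `θ < η`, the cross term is `η^{-α}` and positivity
forces `φ (η^{-α}) < φ (θ^{-α})`. Hence `φ` is strictly increasing on `[0, ∞)`, and so is
`φ ∘ exp` on `[-∞, ∞)`.
-/

namespace EReal

lemma sub_mul_self_add_mul_self_nonpos (a : EReal) {d : ℝ} (hd : 0 ≤ d) :
    a - ((1 + d : ℝ) : EReal) * a + (d : EReal) * a ≤ 0 := by
  have h1d : (0 : ℝ) < 1 + d := by linarith
  induction a with
  | bot => simp
  | top => rw [coe_mul_top_of_pos h1d]; simp
  | coe r =>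
    norm_cast
    linarith

lemma lt_of_pos_sub_mul_add_mul_self {a b : EReal} {d : ℝ} (hd : 0 ≤ d)
    (h : 0 < a - ((1 + d : ℝ) : EReal) * b + (d : EReal) * a) : b < a := by
  by_contra! hab
  refine (sub_mul_self_add_mul_self_nonpos a hd).not_gt (h.trans_le ?_)
  gcongr
  exact EReal.sub_le_sub le_rfl
    (mul_le_mul_of_nonneg_left hab (EReal.coe_nonneg.2 (by linarith)))

lemma lt_of_pos_sub_mul_self_add_mul {a b : EReal} {d : ℝ} (hd : 0 ≤ d)
    (h : 0 < a - ((1 + d : ℝ) : EReal) * a + (d : EReal) * b) : a < b := by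
  by_contra! hba
  refine (sub_mul_self_add_mul_self_nonpos a hd).not_gt (h.trans_le ?_)
  gcongr

end EReal

noncomputable def uniformDensity (a b : ℝ) : ℝ → ℝ≥0∞ :=
  (Ioo a b).indicator fun _ => (ENNReal.ofReal (b - a))⁻¹

lemma measurable_uniformDensity (a b : ℝ) : Measurable (uniformDensity a b) :=
  measurable_const.indicator measurableSet_Ioo

lemma lintegral_uniformDensity_rpow {a b p : ℝ} (hab : a < b) (hp : 0 < p) :
    ∫⁻ x, uniformDensity a b x ^ p = ENNReal.ofReal ((b - a) ^ (1 - p)) := by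
  have hL : 0 < b - a := sub_pos.2 hab
  have hpow : ∀ x, uniformDensity a b x ^ p =
      (Ioo a b).indicator (fun _ => ENNReal.ofReal ((b - a) ^ (-p))) x := by
    intro x
    by_cases hx : x ∈ Ioo a b
    · simp [uniformDensity, hx, ← ENNReal.ofReal_inv_of_pos hL, ENNReal.ofReal_rpow_of_pos,
        Real.inv_rpow hL.le, Real.rpow_neg hL.le, inv_pos.2 hL]
    · simp [uniformDensity, hx, ENNReal.zero_rpow_of_pos hp]
  simp only [hpow]
  rw [lintegral_indicator_const measurableSet_Ioo, Real.volume_Ioo,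
    ← ENNReal.ofReal_mul (by positivity), sub_eq_neg_add 1 p, Real.rpow_add_one hL.ne']

lemma lintegral_uniformDensity_rpow_add_one {a b α : ℝ} (hab : a < b) (hα : 0 < α + 1) :
    ∫⁻ x, uniformDensity a b x ^ (α + 1) = ENNReal.ofReal ((b - a) ^ (-α)) := by
  rw [lintegral_uniformDensity_rpow hab hα, sub_add_cancel_right]

lemma isDensity_uniformDensity {a b α : ℝ} (hab : a < b) (hα : 0 < α) :
    IsDensity volume α (uniformDensity a b) := by
  refine ⟨measurable_uniformDensity a b, ?_, ?_⟩
  · simpa using lintegral_uniformDensity_rpow hab one_pos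
  · rw [lintegral_uniformDensity_rpow hab (by linarith)]
    exact ofReal_lt_top

lemma lintegral_uniformDensity_rpow_mul_of_le {a b c d α : ℝ} (hα : 0 < α) (hbc : b ≤ c) :
    ∫⁻ x, uniformDensity a b x ^ α * uniformDensity c d x = 0 := by
  refine lintegral_eq_zero_of_ae_eq_zero (Filter.Eventually.of_forall fun x => ?_)
  by_cases hx : x ∈ Ioo c d
  · have hx' : x ∉ Ioo a b := fun h => h.2.not_ge (hbc.trans hx.1.le)
    simp [uniformDensity, hx', ENNReal.zero_rpow_of_pos hα]
  · simp [uniformDensity, hx]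

lemma lintegral_uniformDensity_rpow_mul_of_subset {a b c d α : ℝ} (hac : a ≤ c) (hdb : d ≤ b)
    (hcd : c < d) :
    ∫⁻ x, uniformDensity a b x ^ α * uniformDensity c d x = ENNReal.ofReal ((b - a) ^ (-α)) := by
  have hL : 0 < b - a := by linarith
  have hprod : ∀ x, uniformDensity a b x ^ α * uniformDensity c d x =
      (Ioo c d).indicator
        (fun _ => (ENNReal.ofReal (b - a))⁻¹ ^ α * (ENNReal.ofReal (d - c))⁻¹) x := by
    intro x
    by_cases hx : x ∈ Ioo c d
    · have hx' : x ∈ Ioo a b := ⟨hac.trans_lt hx.1, hx.2.trans_le hdb⟩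
      simp [uniformDensity, hx, hx']
    · simp [uniformDensity, hx]
  simp only [hprod]
  rw [lintegral_indicator_const measurableSet_Ioo, Real.volume_Ioo, mul_assoc,
    ENNReal.inv_mul_cancel (by simpa using hcd) ofReal_ne_top, mul_one,
    ← ENNReal.ofReal_inv_of_pos hL, ENNReal.ofReal_rpow_of_pos (inv_pos.2 hL),
    Real.inv_rpow hL.le, Real.rpow_neg hL.le]

lemma not_ae_eq_of_lintegral_rpow_mul_ne {μ : Measure ℝ} {α : ℝ} (hα : 0 ≤ α)
    {f g : ℝ → ℝ≥0∞} (h : ∫⁻ x, f x ^ α * g x ∂μ ≠ ∫⁻ x, g x ^ (α + 1) ∂μ) :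
    ¬ f =ᵐ[μ] g := by
  refine fun hfg => h (lintegral_congr_ae ?_)
  filter_upwards [hfg] with x hx
  rw [hx, ENNReal.rpow_add_of_nonneg _ _ hα zero_le_one, ENNReal.rpow_one]

namespace IsValidDivergence

variable {φ : ℝ≥0∞ → EReal} {α : ℝ}

lemma fdpd_pos {μ : Measure ℝ} (hvalid : IsValidDivergence φ α μ) {f g : ℝ → ℝ≥0∞}
    (hf : IsDensity μ α f) (hg : IsDensity μ α g) (hfg : ¬ f =ᵐ[μ] g) :
    0 < FDPD φ α μ g f :=
  let ⟨hnonneg, hzero⟩ := hvalid f g hf hg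
  hnonneg.lt_of_ne fun h => hfg (hzero.1 h.symm)

lemma apply_zero_lt (hvalid : IsValidDivergence φ α volume) (hα : 0 < α) {t : ℝ} (ht : 0 < t) :
    φ 0 < φ (ENNReal.ofReal t) := by
  set θ := t ^ (-α)⁻¹
  have hθ : 0 < θ := Real.rpow_pos_of_pos ht _
  have hθt : θ ^ (-α) = t := Real.rpow_inv_rpow ht.le (by linarith)
  have hf := lintegral_uniformDensity_rpow_add_one (a := 0) hθ (by linarith : 0 < α + 1)
  have hg := lintegral_uniformDensity_rpow_add_one (lt_add_of_pos_right θ hθ)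
    (by linarith : 0 < α + 1)
  have hcross :=
    lintegral_uniformDensity_rpow_mul_of_le (a := 0) (b := θ) (c := θ) (d := θ + θ) hα le_rfl
  rw [sub_zero, hθt] at hf
  rw [add_sub_cancel_left, hθt] at hg
  have hpos := hvalid.fdpd_pos (isDensity_uniformDensity hθ hα)
    (isDensity_uniformDensity (lt_add_of_pos_right θ hθ) hα)
    (not_ae_eq_of_lintegral_rpow_mul_ne hα.le (by simp [hcross, hg, ht]))
  rw [FDPD, hf, hg, hcross] at hpos
  exact EReal.lt_of_pos_sub_mul_add_mul_self (by positivity) hpos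

lemma apply_lt_apply (hvalid : IsValidDivergence φ α volume) (hα : 0 < α) {s t : ℝ}
    (hs : 0 < s) (hst : s < t) :
    φ (ENNReal.ofReal s) < φ (ENNReal.ofReal t) := by
  have ht : 0 < t := hs.trans hst
  set θ := t ^ (-α)⁻¹
  set η := s ^ (-α)⁻¹
  have hθ : 0 < θ := Real.rpow_pos_of_pos ht _
  have hθη : θ < η := Real.rpow_lt_rpow_of_neg hs hst (by simpa using hα)
  have hθt : θ ^ (-α) = t := Real.rpow_inv_rpow ht.le (by linarith)
  have hηs : η ^ (-α) = s := Real.rpow_inv_rpow hs.le (by linarith)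
  have hf := lintegral_uniformDensity_rpow_add_one (a := 0) (hθ.trans hθη)
    (by linarith : 0 < α + 1)
  have hg := lintegral_uniformDensity_rpow_add_one (a := 0) hθ (by linarith : 0 < α + 1)
  have hcross := lintegral_uniformDensity_rpow_mul_of_subset (α := α) le_rfl hθη.le hθ
  rw [sub_zero, hηs] at hf hcross
  rw [sub_zero, hθt] at hg
  have hpos := hvalid.fdpd_pos (isDensity_uniformDensity (hθ.trans hθη) hα)
    (isDensity_uniformDensity hθ hα)
    (not_ae_eq_of_lintegral_rpow_mul_ne hα.le
      (hcross ▸ hg ▸ ((ENNReal.ofReal_lt_ofReal_iff ht).2 hst).ne))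
  rw [FDPD, hf, hg, hcross] at hpos
  exact EReal.lt_of_pos_sub_mul_self_add_mul (by positivity) hpos

lemma strictMonoOn (hvalid : IsValidDivergence φ α volume) (hα : 0 < α) :
    StrictMonoOn φ (Iio ⊤) := by
  intro s hs t ht hst
  have ht0 : 0 < t.toReal := ENNReal.toReal_pos (pos_of_gt hst).ne' ht.ne
  rw [← ENNReal.ofReal_toReal ht.ne]
  rcases eq_zero_or_pos s with rfl | hs0
  · exact hvalid.apply_zero_lt hα ht0
  · rw [← ENNReal.ofReal_toReal hs.ne]
    exact hvalid.apply_lt_apply hα (ENNReal.toReal_pos hs0.ne' hs.ne)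
      ((ENNReal.toReal_lt_toReal hs.ne ht.ne).2 hst)

end IsValidDivergence

/-- if `FDPD_{φ,α}` is a valid divergence on Lebesgue densities, then
`ψ(x) = φ(eˣ)` is strictly increasing on `[-∞,∞)` (with `e^{-∞} = 0`). -/
theorem psi_strictMono_of_valid_divergence
    (α : ℝ) (hα : 0 < α) (φ : ℝ≥0∞ → EReal)
    (hvalid : IsValidDivergence φ α volume) :
    StrictMonoOn (fun x => φ (EReal.exp x)) (Iio (⊤ : EReal)) :=
  (hvalid.strictMonoOn hα).comp (EReal.exp_strictMono.strictMonoOn _)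
    fun _ hx => EReal.exp_lt_top_iff.2 hx
end

section
/- Fix α > 0. Let φ : [0,∞) → [-∞,∞] be such that FDPD_{φ,α} is a valid divergence on Lebesgue densities in L_{μ,α}. Then ψ(x) := φ(e^x) satisfies: for every γ > -1/(1+α) and all real x < y, (α/(1+α)) ψ(x) + (1/(1+α)) ψ(y) > ψ((1+γ)x − γy). -/
open MeasureTheory ENNReal Set

/-!
Test the divergence on the power-law densities `f_η(x) = (γ+1) η^{-(γ+1)} x^γ` on `(0, η)`.
For `τ ≤ θ` one computes `∫ f_θ^a f_τ^b = (γ+1)^{a+b}/(γ(a+b)+1) · θ^{-(γ+1)a} τ^{γa-b+1}`, so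
with `C = (γ+1)^{1+α}/(1+γ(1+α))` the three integrals in `FDPD(f_τ, f_θ)` are `C θ^{-α}`,
`C θ^{-(γ+1)α} τ^{γα}` and `C τ^{-α}`. The scales `θ = C^{1/α} e^{-x/α}`, `τ = C^{1/α} e^{-y/α}`
turn them into `e^x`, `e^{(1+γ)x-γy}` and `e^y`. As `τ < θ`, the two densities differ on
`(τ, θ)`, so validity makes `FDPD(f_τ, f_θ)` strictly positive; multiplying by `α/(1+α)` gives
the inequality. This rearrangement is legitimate in `EReal` because positivity already rules out
`φ(e^x) = -∞`, `φ(e^y) = -∞` and `φ(e^{(1+γ)x-γy}) = +∞`.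
-/

lemma EReal.lt_weighted_mean_of_fdpd_pos {α : ℝ} (hα : 0 < α) {A B D : EReal}
    (h : 0 < A - ((1 + 1 / α : ℝ) : EReal) * B + ((1 / α : ℝ) : EReal) * D) :
    B < ((α / (1 + α) : ℝ) : EReal) * A + ((1 / (1 + α) : ℝ) : EReal) * D := by
  have hc : (0 : ℝ) < 1 + 1 / α := by positivity
  have hd : (0 : ℝ) < 1 / α := by positivity
  have ha : (0 : ℝ) < α / (1 + α) := by positivity
  have hb : (0 : ℝ) < 1 / (1 + α) := by positivity
  have hmul {c : ℝ} (hc : 0 < c) {x : EReal} (hx : x ≠ ⊥) : (c : EReal) * x ≠ ⊥ := by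
    simp [EReal.mul_ne_bot, hx, hc.le]
  have hA : A ≠ ⊥ := by rintro rfl; simp [EReal.bot_sub] at h
  have hB : B ≠ ⊤ := by
    rintro rfl
    rw [EReal.coe_mul_top_of_pos hc, EReal.sub_top, EReal.bot_add] at h
    exact not_lt_bot h
  have hD : D ≠ ⊥ := by
    rintro rfl
    rw [EReal.coe_mul_bot_of_pos hd, EReal.add_bot] at h
    exact not_lt_bot h
  induction B using EReal.rec with
  | bot => exact bot_lt_iff_ne_bot.2 (EReal.add_ne_bot_iff.2 ⟨hmul ha hA, hmul hb hD⟩)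
  | top => exact absurd rfl hB
  | coe b =>
    induction A using EReal.rec with
    | bot => exact absurd rfl hA
    | top =>
      rw [EReal.coe_mul_top_of_pos ha, EReal.top_add_of_ne_bot (hmul hb hD)]
      exact EReal.coe_lt_top b
    | coe a =>
      induction D using EReal.rec with
      | bot => exact absurd rfl hD
      | top =>
        rw [EReal.coe_mul_top_of_pos hb,
          EReal.add_top_of_ne_bot (hmul ha (EReal.coe_ne_bot a))]
        exact EReal.coe_lt_top b
      | coe d =>
        have h' : 0 < a - (1 + 1 / α) * b + 1 / α * d := by exact_mod_cast h
        have hscaled : 0 < α * (a - (1 + 1 / α) * b + 1 / α * d) / (1 + α) := by positivity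
        have key : b < α / (1 + α) * a + 1 / (1 + α) * d := by
          rw [show α / (1 + α) * a + 1 / (1 + α) * d =
              α * (a - (1 + 1 / α) * b + 1 / α * d) / (1 + α) + b by field_simp; ring]
          linarith
        exact_mod_cast key

lemma lintegral_Ioo_ofReal_mul_rpow {k p η : ℝ} (hk : 0 ≤ k) (hp : -1 < p) (hη : 0 < η) :
    ∫⁻ x in Ioo 0 η, ENNReal.ofReal (k * x ^ p) =
      ENNReal.ofReal (k * (η ^ (p + 1) / (p + 1))) := by
  have hint : IntegrableOn (fun x : ℝ => k * x ^ p) (Ioo 0 η) :=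
    ((intervalIntegral.integrableOn_Ioo_rpow_iff hη).mpr hp).const_mul k
  have hnonneg : 0 ≤ᵐ[volume.restrict (Ioo 0 η)] fun x : ℝ => k * x ^ p := by
    filter_upwards [ae_restrict_mem measurableSet_Ioo] with x hx
    exact mul_nonneg hk (Real.rpow_nonneg hx.1.le p)
  rw [← ofReal_integral_eq_lintegral_ofReal hint hnonneg, integral_const_mul,
    ← integral_Ioc_eq_integral_Ioo, ← intervalIntegral.integral_of_le hη.le,
    integral_rpow (Or.inl hp), Real.zero_rpow (by linarith), sub_zero]

noncomputable def powerDensity (γ η : ℝ) : ℝ → ℝ≥0∞ :=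
  (Ioo 0 η).indicator fun x => ENNReal.ofReal ((γ + 1) * η ^ (-(γ + 1)) * x ^ γ)

section PowerDensity

variable {γ θ τ : ℝ}

lemma powerDensity_rpow_mul_rpow (hγ : -1 < γ) (hτ : 0 < τ) (hτθ : τ ≤ θ) {a b : ℝ}
    (ha : 0 ≤ a) (hb : 0 < b) :
    (fun x => powerDensity γ θ x ^ a * powerDensity γ τ x ^ b) =
      (Ioo 0 τ).indicator fun x => ENNReal.ofReal
        (((γ + 1) * θ ^ (-(γ + 1))) ^ a * ((γ + 1) * τ ^ (-(γ + 1))) ^ b *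
          x ^ (γ * (a + b))) := by
  funext x
  by_cases hx : x ∈ Ioo 0 τ
  · have hxθ : x ∈ Ioo 0 θ := ⟨hx.1, hx.2.trans_le hτθ⟩
    have hθ : 0 < θ := hτ.trans_le hτθ
    have hcoef {η : ℝ} (hη : 0 < η) : 0 ≤ (γ + 1) * η ^ (-(γ + 1)) :=
      mul_nonneg (by linarith) (Real.rpow_nonneg hη.le _)
    have hxγ : 0 ≤ x ^ γ := Real.rpow_nonneg hx.1.le γ
    rw [powerDensity, powerDensity, indicator_of_mem hx, indicator_of_mem hx,
      indicator_of_mem hxθ, ENNReal.ofReal_rpow_of_nonneg (mul_nonneg (hcoef hθ) hxγ) ha,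
      ENNReal.ofReal_rpow_of_nonneg (mul_nonneg (hcoef hτ) hxγ) hb.le,
      ← ENNReal.ofReal_mul (Real.rpow_nonneg (mul_nonneg (hcoef hθ) hxγ) a)]
    congr 1
    rw [Real.mul_rpow (hcoef hθ) hxγ, Real.mul_rpow (hcoef hτ) hxγ, ← Real.rpow_mul hx.1.le,
      ← Real.rpow_mul hx.1.le, mul_add, Real.rpow_add hx.1]
    ring
  · simp [powerDensity, indicator_of_notMem hx, ENNReal.zero_rpow_of_pos hb]

lemma lintegral_powerDensity_rpow_mul_rpow (hγ : -1 < γ) (hτ : 0 < τ) (hτθ : τ ≤ θ)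
    {a b : ℝ} (ha : 0 ≤ a) (hb : 0 < b) (hab : -1 < γ * (a + b)) :
    ∫⁻ x, powerDensity γ θ x ^ a * powerDensity γ τ x ^ b =
      ENNReal.ofReal ((γ + 1) ^ (a + b) / (γ * (a + b) + 1) * θ ^ (-(γ + 1) * a) *
        τ ^ (γ * a - b + 1)) := by
  have hθ : 0 < θ := hτ.trans_le hτθ
  have hγ1 : 0 < γ + 1 := by linarith
  have hk : 0 ≤ ((γ + 1) * θ ^ (-(γ + 1))) ^ a * ((γ + 1) * τ ^ (-(γ + 1))) ^ b := by
    positivity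
  rw [powerDensity_rpow_mul_rpow hγ hτ hτθ ha hb, lintegral_indicator measurableSet_Ioo,
    lintegral_Ioo_ofReal_mul_rpow hk hab hτ]
  congr 1
  have hτpow : τ ^ (-(γ + 1) * b) * τ ^ (γ * (a + b) + 1) = τ ^ (γ * a - b + 1) := by
    rw [← Real.rpow_add hτ]; ring_nf
  rw [Real.mul_rpow hγ1.le (by positivity), Real.mul_rpow hγ1.le (by positivity),
    ← Real.rpow_mul hθ.le, ← Real.rpow_mul hτ.le, Real.rpow_add hγ1, ← hτpow]
  ring

lemma lintegral_powerDensity_rpow {η s : ℝ} (hγ : -1 < γ) (hη : 0 < η) (hs : 0 < s)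
    (hγs : -1 < γ * s) :
    ∫⁻ x, powerDensity γ η x ^ s =
      ENNReal.ofReal ((γ + 1) ^ s / (γ * s + 1) * η ^ (1 - s)) := by
  simpa [neg_add_eq_sub] using
    lintegral_powerDensity_rpow_mul_rpow hγ hη le_rfl le_rfl hs (by simpa using hγs)

lemma isDensity_powerDensity {α η : ℝ} (hγ : -1 < γ) (hη : 0 < η) (hα : 0 < 1 + α)
    (hγα : -1 < γ * (1 + α)) : IsDensity volume α (powerDensity γ η) := by
  have hγ1 : 0 < γ + 1 := by linarith
  refine ⟨Measurable.indicator (by fun_prop) measurableSet_Ioo, ?_, ?_⟩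
  · simpa [hγ1.ne'] using lintegral_powerDensity_rpow hγ hη one_pos (by linarith)
  · rw [lintegral_powerDensity_rpow hγ hη hα hγα]
    exact ENNReal.ofReal_lt_top

lemma powerDensity_not_ae_eq (hγ : -1 < γ) (hτ : 0 < τ) (hτθ : τ < θ) :
    ¬ powerDensity γ θ =ᵐ[volume] powerDensity γ τ := by
  intro h
  have hsub : Ioo τ θ ⊆ {x | powerDensity γ θ x ≠ powerDensity γ τ x} := by
    intro x hx
    have hx0 : 0 < x := hτ.trans hx.1
    have hpos : 0 < (γ + 1) * θ ^ (-(γ + 1)) * x ^ γ := by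
      have : 0 < γ + 1 := by linarith
      have := hτ.trans hτθ
      positivity
    show powerDensity γ θ x ≠ powerDensity γ τ x
    rw [powerDensity, powerDensity, indicator_of_mem (show x ∈ Ioo 0 θ from ⟨hx0, hx.2⟩),
      indicator_of_notMem (show x ∉ Ioo 0 τ from fun h' => h'.2.not_gt hx.1)]
    exact (ENNReal.ofReal_pos.2 hpos).ne'
  have := measure_mono_null hsub (ae_iff.mp h)
  rw [Real.volume_Ioo, ENNReal.ofReal_eq_zero] at this
  linarith

end PowerDensity

section Scale

variable {α γ : ℝ}

noncomputable def fdpdConst (α γ : ℝ) : ℝ := (γ + 1) ^ (α + 1) / (γ * (α + 1) + 1)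

/-- The scale `C^{1/α} e^{-t/α}`, at which `∫ f^{α+1} = e^t`. -/
noncomputable def fdpdScale (α γ t : ℝ) : ℝ :=
  Real.exp ((Real.log (fdpdConst α γ) - t) / α)

lemma fdpdScale_pos {t : ℝ} : 0 < fdpdScale α γ t := Real.exp_pos _

lemma fdpdConst_pos (hγ : -1 < γ) (hγα : -1 < γ * (α + 1)) : 0 < fdpdConst α γ := by
  have : 0 < γ + 1 := by linarith
  have : 0 < γ * (α + 1) + 1 := by linarith
  unfold fdpdConst
  positivity

lemma fdpdScale_lt_fdpdScale (hα : 0 < α) {x y : ℝ} (hxy : x < y) :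
    fdpdScale α γ y < fdpdScale α γ x := by
  unfold fdpdScale
  gcongr

lemma lintegral_powerDensity_fdpdScale_rpow (hα : 0 < α) (hγ : -1 < γ)
    (hγα : -1 < γ * (α + 1)) (t : ℝ) :
    ∫⁻ z, powerDensity γ (fdpdScale α γ t) z ^ (α + 1) = ENNReal.ofReal (Real.exp t) := by
  rw [lintegral_powerDensity_rpow hγ fdpdScale_pos (by linarith) hγα]
  congr 1
  rw [← fdpdConst, ← Real.exp_log (fdpdConst_pos hγ hγα), fdpdScale, ← Real.exp_mul,
    ← Real.exp_add]
  congr 1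
  field_simp
  ring

lemma lintegral_powerDensity_fdpdScale_rpow_mul (hα : 0 < α) (hγ : -1 < γ)
    (hγα : -1 < γ * (α + 1)) {x y : ℝ} (hxy : x < y) :
    ∫⁻ z, powerDensity γ (fdpdScale α γ x) z ^ α * powerDensity γ (fdpdScale α γ y) z =
      ENNReal.ofReal (Real.exp ((1 + γ) * x - γ * y)) := by
  have h := lintegral_powerDensity_rpow_mul_rpow hγ fdpdScale_pos
    (fdpdScale_lt_fdpdScale (γ := γ) hα hxy).le hα.le one_pos hγα
  simp only [ENNReal.rpow_one] at h
  rw [h]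
  congr 1
  rw [← fdpdConst, ← Real.exp_log (fdpdConst_pos hγ hγα), fdpdScale, fdpdScale,
    ← Real.exp_mul, ← Real.exp_mul, ← Real.exp_add, ← Real.exp_add]
  congr 1
  field_simp
  ring

end Scale

/-- if `FDPD_{φ,α}` is a valid divergence on Lebesgue densities, then
`ψ(x) = φ(eˣ)` satisfies, for every `γ > -1/(1+α)` and all reals `x < y`,
`(α/(1+α)) ψ(x) + (1/(1+α)) ψ(y) > ψ((1+γ)x − γy)`. -/
theorem psi_strict_inequality_of_valid_divergence_left
    (α : ℝ) (hα : 0 < α) (φ : ℝ≥0∞ → EReal)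
    (hvalid : IsValidDivergence φ α volume) :
    ∀ γ : ℝ, -(1 / (1 + α)) < γ → ∀ x y : ℝ, x < y →
      φ (EReal.exp (((1 + γ) * x - γ * y : ℝ) : EReal)) <
        ((α / (1 + α) : ℝ) : EReal) * φ (EReal.exp (x : EReal)) +
          ((1 / (1 + α) : ℝ) : EReal) * φ (EReal.exp (y : EReal)) := by
  intro γ hγ x y hxy
  have hγα : -1 < γ * (1 + α) := by
    have := mul_lt_mul_of_pos_right hγ (by linarith : (0 : ℝ) < 1 + α)
    rwa [neg_mul, one_div_mul_cancel (by linarith)] at this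
  have hγα' : -1 < γ * (α + 1) := by rwa [add_comm α]
  have hγ1 : -1 < γ := by nlinarith
  have hθ_dens : IsDensity volume α (powerDensity γ (fdpdScale α γ x)) :=
    isDensity_powerDensity hγ1 fdpdScale_pos (by linarith) hγα
  have hτ_dens : IsDensity volume α (powerDensity γ (fdpdScale α γ y)) :=
    isDensity_powerDensity hγ1 fdpdScale_pos (by linarith) hγα
  have hpos := (hvalid _ _ hθ_dens hτ_dens).1.lt_of_ne fun h => powerDensity_not_ae_eq hγ1
    fdpdScale_pos (fdpdScale_lt_fdpdScale hα hxy) ((hvalid _ _ hθ_dens hτ_dens).2.1 h.symm)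
  rw [FDPD, lintegral_powerDensity_fdpdScale_rpow hα hγ1 hγα',
    lintegral_powerDensity_fdpdScale_rpow hα hγ1 hγα',
    lintegral_powerDensity_fdpdScale_rpow_mul hα hγ1 hγα' hxy] at hpos
  simpa only [EReal.exp_coe] using EReal.lt_weighted_mean_of_fdpd_pos hα hpos
end

section
/- Fix α > 0. Let φ : [0,∞) → [-∞,∞] be such that FDPD_{φ,α} is a valid divergence. Then ψ(x) := φ(e^x) satisfies: for every γ > -1/(1+α) and all real x > y, (α/(1+α)) ψ(x) + (1/(1+α)) ψ(y) > ψ((1 − (γ+1)/α) x + ((γ+1)/α) y). -/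
/-!
Validity makes `FDPD(g, f)` strictly positive for densities `f ≠ g`, and `FDPD` depends only on
`∫ f^(α+1)`, `∫ f^α g` and `∫ g^(α+1)`. So it suffices to realise `eˣ`, `eᵐ`, `eʸ` (with `m` the
interpolated point) as these three integrals for two different densities. Hölder's inequality
forces `(α + 1) m ≤ α x + y`, and `γ > -1/(1+α)`, `x > y` give this strictly. Step functions
suffice: on a short common interval `f` and `g` have heights chosen to produce the cross integral
`eᵐ` while using less than all of the mass and of the powers `eˣ`, `eʸ`; a private block for each
density then supplies what is missing. Writing heights and lengths as exponentials makes every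
constraint linear.
-/

open MeasureTheory ENNReal Set

lemma ENNReal.ofReal_exp_rpow (s β : ℝ) :
    ENNReal.ofReal (Real.exp s) ^ β = ENNReal.ofReal (Real.exp (β * s)) := by
  rw [ENNReal.ofReal_rpow_of_pos (Real.exp_pos s), ← Real.exp_mul, mul_comm]

lemma ENNReal.ofReal_exp_mul_ofReal_exp (a b : ℝ) :
    ENNReal.ofReal (Real.exp a) * ENNReal.ofReal (Real.exp b) =
      ENNReal.ofReal (Real.exp (a + b)) := by
  rw [← ENNReal.ofReal_mul (Real.exp_nonneg a), Real.exp_add]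

lemma EReal.lt_mul_add_mul_of_pos_sub_mul_add_mul {r k d : ℝ} (hr : 0 < r) (hrk : r * k = 1)
    {a b c : EReal} (h : 0 < a - (k : EReal) * b + (d : EReal) * c) :
    b < (r : EReal) * a + ((r * d : ℝ) : EReal) * c := by
  have hr' : (0 : EReal) ≤ r := by exact_mod_cast hr.le
  have hscaled := EReal.mul_pos (EReal.coe_pos.2 hr) h
  rw [EReal.left_distrib_of_nonneg_of_ne_top hr' (EReal.coe_ne_top r),
    EReal.mul_sub_of_nonneg_of_ne_top hr' (EReal.coe_ne_top r), ← mul_assoc, ← mul_assoc,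
    ← EReal.coe_mul, ← EReal.coe_mul, hrk, EReal.coe_one, one_mul] at hscaled
  rw [← EReal.sub_pos]
  convert hscaled using 1
  rw [sub_eq_add_neg, sub_eq_add_neg, add_right_comm]

section ExpStep

variable {X : Type*} {S T R : Set X}

noncomputable def expStep (S T : Set X) (s s' : ℝ) (z : X) : ℝ≥0∞ :=
  S.indicator (fun _ => ENNReal.ofReal (Real.exp s)) z +
    T.indicator (fun _ => ENNReal.ofReal (Real.exp s')) z

lemma expStep_rpow (hST : Disjoint S T) (s s' : ℝ) {β : ℝ} (hβ : 0 < β) (z : X) :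
    expStep S T s s' z ^ β = expStep S T (β * s) (β * s') z := by
  by_cases hzS : z ∈ S
  · simp [expStep, hzS, Set.disjoint_left.mp hST hzS, ENNReal.ofReal_exp_rpow]
  · by_cases hzT : z ∈ T <;>
      simp [expStep, hzS, hzT, ENNReal.ofReal_exp_rpow, ENNReal.zero_rpow_of_pos hβ]

lemma expStep_rpow_mul_expStep (hST : Disjoint S T) (hSR : Disjoint S R) (hTR : Disjoint T R)
    (s s' t t' : ℝ) {β : ℝ} (hβ : 0 < β) (z : X) :
    expStep S T s s' z ^ β * expStep S R t t' z =
      S.indicator (fun _ => ENNReal.ofReal (Real.exp (β * s + t))) z := by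
  rw [expStep_rpow hST s s' hβ]
  by_cases hzS : z ∈ S
  · simp [expStep, hzS, Set.disjoint_left.mp hST hzS, Set.disjoint_left.mp hSR hzS,
      ENNReal.ofReal_exp_mul_ofReal_exp]
  · by_cases hzT : z ∈ T
    · simp [expStep, hzS, hzT, Set.disjoint_left.mp hTR hzT]
    · simp [expStep, hzS, hzT]

variable [MeasurableSpace X] {μ : Measure X}

lemma measurable_expStep (hS : MeasurableSet S) (hT : MeasurableSet T) (s s' : ℝ) :
    Measurable (expStep S T s s') :=
  (measurable_const.indicator hS).add (measurable_const.indicator hT)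

lemma lintegral_expStep (hS : MeasurableSet S) (hT : MeasurableSet T) {ℓ ℓ' : ℝ}
    (hμS : μ S = ENNReal.ofReal (Real.exp ℓ)) (hμT : μ T = ENNReal.ofReal (Real.exp ℓ'))
    (s s' : ℝ) :
    ∫⁻ z, expStep S T s s' z ∂μ = ENNReal.ofReal (Real.exp (s + ℓ) + Real.exp (s' + ℓ')) := by
  unfold expStep
  rw [lintegral_add_left (measurable_const.indicator hS), lintegral_indicator_const hS,
    lintegral_indicator_const hT, hμS, hμT, ENNReal.ofReal_exp_mul_ofReal_exp,
    ENNReal.ofReal_exp_mul_ofReal_exp, ENNReal.ofReal_add (Real.exp_nonneg _) (Real.exp_nonneg _)]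

lemma lintegral_expStep_rpow (hS : MeasurableSet S) (hT : MeasurableSet T) (hST : Disjoint S T)
    {ℓ ℓ' : ℝ} (hμS : μ S = ENNReal.ofReal (Real.exp ℓ))
    (hμT : μ T = ENNReal.ofReal (Real.exp ℓ')) (s s' : ℝ) {β : ℝ} (hβ : 0 < β) :
    ∫⁻ z, expStep S T s s' z ^ β ∂μ =
      ENNReal.ofReal (Real.exp (β * s + ℓ) + Real.exp (β * s' + ℓ')) := by
  simp_rw [expStep_rpow hST s s' hβ]
  exact lintegral_expStep hS hT hμS hμT _ _

lemma not_expStep_ae_eq (hST : Disjoint S T) (hTR : Disjoint T R) (hμT : μ T ≠ 0)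
    (s s' t t' : ℝ) : ¬ expStep S T s s' =ᵐ[μ] expStep S R t t' := by
  intro hae
  refine hμT (measure_mono_null (fun z hzT => ?_) (ae_iff.mp hae))
  simp [expStep, hzT, Set.disjoint_right.mp hST hzT, Set.disjoint_left.mp hTR hzT, Real.exp_pos]

end ExpStep

lemma isDensity_expStep {μ : Measure ℝ} {α : ℝ} (hα : 0 < 1 + α) {S T : Set ℝ}
    (hS : MeasurableSet S) (hT : MeasurableSet T) (hST : Disjoint S T) {ℓ ℓ' : ℝ}
    (hμS : μ S = ENNReal.ofReal (Real.exp ℓ)) (hμT : μ T = ENNReal.ofReal (Real.exp ℓ'))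
    {s s' : ℝ} (hmass : Real.exp (s + ℓ) + Real.exp (s' + ℓ') = 1) :
    IsDensity μ α (expStep S T s s') :=
  ⟨measurable_expStep hS hT s s',
    by rw [lintegral_expStep hS hT hμS hμT, hmass, ENNReal.ofReal_one],
    by rw [lintegral_expStep_rpow hS hT hST hμS hμT s s' hα]; exact ENNReal.ofReal_lt_top⟩

lemma exists_exp_mass_and_power {α M P : ℝ} (hα : 0 < α) (hM : 0 < M) (hP : 0 < P) :
    ∃ s ℓ : ℝ, Real.exp (s + ℓ) = M ∧ Real.exp ((α + 1) * s + ℓ) = P := by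
  set s := (Real.log P - Real.log M) / α
  refine ⟨s, Real.log M - s, by rw [add_sub_cancel, Real.exp_log hM], ?_⟩
  rw [show (α + 1) * s + (Real.log M - s) = Real.log P by simp only [s]; field_simp; ring,
    Real.exp_log hP]

lemma exists_shared_block {α x y m : ℝ} (hα : 0 < α) (hm : (α + 1) * m < α * x + y) :
    ∃ s t ℓ : ℝ, s + ℓ < 0 ∧ t + ℓ < 0 ∧ (α + 1) * s + ℓ < x ∧ (α + 1) * t + ℓ < y ∧
      α * s + t + ℓ = m := by
  -- `s`, `t` are found from `(α + 1) s + ℓ = x - δ`, `(α + 1) t + ℓ = y - δ`, whose right sides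
  -- `p`, `q` satisfy `α p + q = (α + 1) m`; `ℓ` is so negative that `p + α ℓ`, `q + α ℓ` < 0.
  set δ := (α * x + y - (α + 1) * m) / (α + 1)
  have hδ : 0 < δ := div_pos (by linarith) (by linarith)
  set ℓ := -(|x - δ| + |y - δ| + 1) / α
  have hαℓ : α * ℓ = -(|x - δ| + |y - δ| + 1) := mul_div_cancel₀ _ hα.ne'
  have hα1 : 0 < α + 1 := by linarith
  have hsℓ (p : ℝ) : (p - ℓ) / (α + 1) + ℓ = (p + α * ℓ) / (α + 1) := by field_simp; ring
  refine ⟨(x - δ - ℓ) / (α + 1), (y - δ - ℓ) / (α + 1), ℓ, ?_, ?_, ?_, ?_, ?_⟩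
  · rw [hsℓ]
    exact div_neg_of_neg_of_pos (by linarith [le_abs_self (x - δ), abs_nonneg (y - δ)]) hα1
  · rw [hsℓ]
    exact div_neg_of_neg_of_pos (by linarith [le_abs_self (y - δ), abs_nonneg (x - δ)]) hα1
  · rw [mul_div_cancel₀ _ (by positivity)]; linarith
  · rw [mul_div_cancel₀ _ (by positivity)]; linarith
  · simp only [δ]
    field_simp
    ring

theorem exists_isDensity_pair_lintegral_eq {α x y m : ℝ} (hα : 0 < α)
    (hm : (α + 1) * m < α * x + y) :
    ∃ f g : ℝ → ℝ≥0∞, IsDensity volume α f ∧ IsDensity volume α g ∧ ¬ f =ᵐ[volume] g ∧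
      ∫⁻ z, f z ^ (α + 1) = ENNReal.ofReal (Real.exp x) ∧
      ∫⁻ z, g z ^ (α + 1) = ENNReal.ofReal (Real.exp y) ∧
      ∫⁻ z, f z ^ α * g z = ENNReal.ofReal (Real.exp m) := by
  obtain ⟨s, t, ℓ, hsℓ, htℓ, hsx, hty, hstm⟩ := exists_shared_block hα hm
  obtain ⟨s₁, ℓ₁, hmass₁, hpow₁⟩ := exists_exp_mass_and_power hα
    (sub_pos.2 (Real.exp_lt_one_iff.2 hsℓ)) (sub_pos.2 (Real.exp_lt_exp.2 hsx))
  obtain ⟨s₂, ℓ₂, hmass₂, hpow₂⟩ := exists_exp_mass_and_power hα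
    (sub_pos.2 (Real.exp_lt_one_iff.2 htℓ)) (sub_pos.2 (Real.exp_lt_exp.2 hty))
  set S := Ico 0 (Real.exp ℓ)
  set T₁ := Ico (-Real.exp ℓ₁) 0
  set T₂ := Ico (Real.exp ℓ) (Real.exp ℓ + Real.exp ℓ₂)
  have hvolS : volume S = ENNReal.ofReal (Real.exp ℓ) := by simp [S]
  have hvol₁ : volume T₁ = ENNReal.ofReal (Real.exp ℓ₁) := by simp [T₁]
  have hvol₂ : volume T₂ = ENNReal.ofReal (Real.exp ℓ₂) := by simp [T₂]
  have hST₁ : Disjoint S T₁ := Set.Ico_disjoint_Ico_same.symm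
  have hST₂ : Disjoint S T₂ := Set.Ico_disjoint_Ico_same
  have hT₁₂ : Disjoint T₁ T₂ :=
    Set.disjoint_left.2 fun z h₁ h₂ => by linarith [h₁.2, h₂.1, Real.exp_pos ℓ]
  have hα1 : 0 < α + 1 := by linarith
  refine ⟨expStep S T₁ s s₁, expStep S T₂ t s₂,
    isDensity_expStep (by linarith) measurableSet_Ico measurableSet_Ico hST₁ hvolS hvol₁
      (by rw [hmass₁]; ring),
    isDensity_expStep (by linarith) measurableSet_Ico measurableSet_Ico hST₂ hvolS hvol₂
      (by rw [hmass₂]; ring),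
    not_expStep_ae_eq hST₁ hT₁₂ (by simp [hvol₁, Real.exp_pos]) _ _ _ _, ?_, ?_, ?_⟩
  · rw [lintegral_expStep_rpow measurableSet_Ico measurableSet_Ico hST₁ hvolS hvol₁ _ _ hα1,
      hpow₁, add_sub_cancel]
  · rw [lintegral_expStep_rpow measurableSet_Ico measurableSet_Ico hST₂ hvolS hvol₂ _ _ hα1,
      hpow₂, add_sub_cancel]
  · simp_rw [expStep_rpow_mul_expStep hST₁ hST₂ hT₁₂ s s₁ t s₂ hα]
    rw [lintegral_indicator_const measurableSet_Ico, hvolS, ENNReal.ofReal_exp_mul_ofReal_exp,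
      hstm]

lemma add_one_mul_lt_of_neg_one_div_lt {α γ x y : ℝ} (hα : 0 < α) (hγ : -(1 / (1 + α)) < γ)
    (hxy : y < x) :
    (α + 1) * ((1 - (γ + 1) / α) * x + ((γ + 1) / α) * y) < α * x + y := by
  have hα1 : 0 < 1 + α := by linarith
  have hγα : α < (1 + α) * (γ + 1) := by
    have hscaled := mul_lt_mul_of_pos_left hγ hα1
    rw [mul_neg, mul_one_div_cancel hα1.ne'] at hscaled
    linarith
  have key : α * x + y - (α + 1) * ((1 - (γ + 1) / α) * x + ((γ + 1) / α) * y) =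
      ((1 + α) * (γ + 1) - α) / α * (x - y) := by
    field_simp
    ring
  have hgap := mul_pos (div_pos (sub_pos.2 hγα) hα) (sub_pos.2 hxy)
  linarith

/-- if `FDPD_{φ,α}` is a valid divergence on Lebesgue densities, then
`ψ(x) = φ(eˣ)` satisfies, for every `γ > -1/(1+α)` and all reals `x > y`,
`(α/(1+α)) ψ(x) + (1/(1+α)) ψ(y) > ψ((1 − (γ+1)/α)x + ((γ+1)/α)y)`. -/
theorem psi_strict_inequality_of_valid_divergence_right
    (α : ℝ) (hα : 0 < α) (φ : ℝ≥0∞ → EReal)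
    (hvalid : IsValidDivergence φ α volume) :
    ∀ γ : ℝ, -(1 / (1 + α)) < γ → ∀ x y : ℝ, y < x →
      φ (EReal.exp (((1 - (γ + 1) / α) * x + ((γ + 1) / α) * y : ℝ) : EReal)) <
        ((α / (1 + α) : ℝ) : EReal) * φ (EReal.exp (x : EReal)) +
          ((1 / (1 + α) : ℝ) : EReal) * φ (EReal.exp (y : EReal)) := by
  intro γ hγ x y hxy
  obtain ⟨f, g, hf, hg, hfg, hfx, hgy, hfgm⟩ :=
    exists_isDensity_pair_lintegral_eq hα (add_one_mul_lt_of_neg_one_div_lt hα hγ hxy)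
  obtain ⟨hnonneg, hzero⟩ := hvalid f g hf hg
  have hpos : 0 < FDPD φ α volume g f := hnonneg.lt_of_ne fun h => hfg (hzero.1 h.symm)
  rw [FDPD, hfx, hgy, hfgm] at hpos
  have hα1 : 0 < 1 + α := by linarith
  have hlt :=
    EReal.lt_mul_add_mul_of_pos_sub_mul_add_mul (div_pos hα hα1) (by field_simp; ring) hpos
  rwa [show α / (1 + α) * (1 / α) = 1 / (1 + α) by field_simp] at hlt
end

section
/- Let λ ∈ (0,1) and ψ : ℝ → ℝ be strictly increasing. Suppose that for every n ≥ 1 and all x > y, λψ(x) + (1-λ)ψ(y) > ψ(λx + (1-λ)y − (x−y)/(αn)) for a fixed α > 0, and a symmetric family of inequalities holds for x < y. Then the left-limit function ψ(x−) := lim_{v↑x} ψ(v) satisfies λψ(x−) + (1-λ)ψ(y−) ≥ ψ((λx + (1-λ)y)−) for all x, y ∈ ℝ, i.e., ψ(·−) is λ-convex. -/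
open Set Filter Topology

/-! Letting `n → ∞` in the hypothesis gives `ψ(λx + (1-λ)y - ε) ≤ λψ(x) + (1-λ)ψ(y)` for every
`ε > 0`. For `t < z := λx + (1-λ)y` apply this at `x - δ, y - δ` with `δ = (z - t)/2`, so that
`ψ t ≤ λψ(x - δ) + (1-λ)ψ(y - δ) ≤ λψ(x-) + (1-λ)ψ(y-)` by monotonicity; letting `t ↑ z` bounds
`ψ(z-)`. -/

theorem Monotone.le_of_tendsto_nhdsLT {α β : Type*} [LinearOrder α] [TopologicalSpace α]
    [OrderTopology α] [DenselyOrdered α] [Preorder β] [TopologicalSpace β] [ClosedIciTopology β]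
    {ψ : α → β}
    (hψ : Monotone ψ) {x : α} {l : β} (hl : Tendsto ψ (𝓝[<] x) (𝓝 l)) {y : α} (hyx : y < x) :
    ψ y ≤ l :=
  have := nhdsLT_neBot_of_exists_lt ⟨y, hyx⟩
  _root_.ge_of_tendsto hl <| by
    filter_upwards [Ioo_mem_nhdsLT hyx] with t ht using hψ ht.1.le

theorem apply_combo_sub_le_of_perturbed {ψ : ℝ → ℝ} (hψ : Monotone ψ) {α lam : ℝ} (hα : 0 < α)
    (hineq : ∀ n : ℕ, 0 < n → ∀ x y : ℝ, x ≠ y →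
      ψ (lam * x + (1 - lam) * y - |x - y| / (α * n)) < lam * ψ x + (1 - lam) * ψ y)
    (x y : ℝ) {ε : ℝ} (hε : 0 < ε) :
    ψ (lam * x + (1 - lam) * y - ε) ≤ lam * ψ x + (1 - lam) * ψ y := by
  rcases eq_or_ne x y with rfl | hxy
  · calc ψ (lam * x + (1 - lam) * x - ε) ≤ ψ x := hψ (by linarith)
      _ = lam * ψ x + (1 - lam) * ψ x := by ring
  obtain ⟨n, hn⟩ := exists_nat_gt (|x - y| / (α * ε))
  have hn_pos : (0 : ℝ) < n := lt_of_le_of_lt (by positivity) hn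
  have hsmall : |x - y| / (α * n) < ε := by
    rw [div_lt_iff₀ (by positivity)]
    rw [div_lt_iff₀ (by positivity)] at hn
    linarith
  calc ψ (lam * x + (1 - lam) * y - ε)
      ≤ ψ (lam * x + (1 - lam) * y - |x - y| / (α * n)) := hψ (by linarith)
    _ ≤ lam * ψ x + (1 - lam) * ψ y := (hineq n (by exact_mod_cast hn_pos) x y hxy).le

theorem leftLim_combo_le_of_apply_combo_sub_le {ψ g : ℝ → ℝ} (hψ : Monotone ψ) {lam : ℝ}
    (hlam₀ : 0 ≤ lam) (hlam₁ : lam ≤ 1)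
    (hsub : ∀ x y ε : ℝ, 0 < ε →
      ψ (lam * x + (1 - lam) * y - ε) ≤ lam * ψ x + (1 - lam) * ψ y)
    (hg : ∀ x : ℝ, Tendsto ψ (𝓝[<] x) (𝓝 (g x))) (x y : ℝ) :
    g (lam * x + (1 - lam) * y) ≤ lam * g x + (1 - lam) * g y := by
  refine le_of_tendsto (hg _) (eventually_nhdsWithin_of_forall fun t (ht : t < _) => ?_)
  set δ := (lam * x + (1 - lam) * y - t) / 2
  have hδ : 0 < δ := by simp only [δ]; linarith
  calc ψ t = ψ (lam * (x - δ) + (1 - lam) * (y - δ) - δ) := by congr 1; simp only [δ]; ring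
    _ ≤ lam * ψ (x - δ) + (1 - lam) * ψ (y - δ) := hsub _ _ δ hδ
    _ ≤ lam * g x + (1 - lam) * g y := by
      have hx := hψ.le_of_tendsto_nhdsLT (hg x) (sub_lt_self x hδ)
      have hy := hψ.le_of_tendsto_nhdsLT (hg y) (sub_lt_self y hδ)
      gcongr

/-- Let `λ = α/(1+α) ∈ (0,1)` and `ψ : ℝ → ℝ` strictly increasing. If for every
`n ≥ 1` and all `x ≠ y` the strict perturbed inequality
`λψ(x) + (1-λ)ψ(y) > ψ(λx + (1-λ)y − |x−y|/(αn))` holds, then the left-limit function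
`g(x) = ψ(x−)` is `λ`-convex: `λ g(x) + (1-λ) g(y) ≥ g(λx + (1-λ)y)`. -/
theorem left_limit_lambda_convex
    (α lam : ℝ) (hα : 0 < α) (hlam : lam = α / (1 + α))
    (ψ g : ℝ → ℝ) (hψ : StrictMono ψ)
    (hineq : ∀ n : ℕ, 0 < n → ∀ x y : ℝ, x ≠ y →
      ψ (lam * x + (1 - lam) * y - |x - y| / (α * n)) < lam * ψ x + (1 - lam) * ψ y)
    (hg : ∀ x : ℝ, Tendsto ψ (nhdsWithin x (Iio x)) (nhds (g x))) :
    ∀ x y : ℝ, g (lam * x + (1 - lam) * y) ≤ lam * g x + (1 - lam) * g y := by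
  have hlam₀ : 0 ≤ lam := by rw [hlam]; positivity
  have hlam₁ : lam ≤ 1 := by rw [hlam, div_le_one (by linarith)]; linarith
  exact leftLim_combo_le_of_apply_combo_sub_le hψ.monotone hlam₀ hlam₁
    (fun x y _ hε => apply_combo_sub_le_of_perturbed hψ.monotone hα hineq x y hε) hg
end

section
/- Fix α > 0. Let φ : [0,∞) → [-∞,∞] and suppose FDPD_{φ,α}(g,f) := φ(∫ f^{α+1}) − (1+1/α)φ(∫ f^α g) + (1/α)φ(∫ g^{α+1}) is a valid divergence on the class of Lebesgue probability densities with finite (1+α)-th power integral (nonnegative, zero iff f = g a.e.). Then ψ(x) := φ(e^x) is convex and strictly increasing on [-∞, ∞) and ψ(ℝ) ⊆ ℝ. No continuity or smoothness of φ is assumed. -/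
open MeasureTheory ENNReal Set

/-! For densities `f, g` put `x₁ = log ∫ f ^ (α + 1)`, `x₂ = log ∫ f ^ α g` and
`x₃ = log ∫ g ^ (α + 1)`. Nonnegativity of the divergence reads
`(α + 1) ψ x₂ ≤ α ψ x₁ + ψ x₃`, strictly unless `f = g` a.e., while Hölder's inequality gives
`(α + 1) x₂ ≤ α x₁ + x₃`. Pairs of two-level step functions `f ≠ g` realize every triple with
`(α + 1) x₂ < α x₁ + x₃`, as well as `∫ f ^ α g = 0`; taking `g = f`, where the divergence
vanishes, shows that `ψ` is finite, and `x₁ = x₃` shows that it is strictly increasing.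

So `ψ` satisfies Jensen's inequality with the single weight `α / (α + 1)` at every point strictly
to the left of the convex combination. The weights with this property are closed under products
and `t ↦ 1 - t`, hence approximate every `t ∈ (0, 1)` from below, and monotonicity of `ψ` turns
this into convexity. -/

def JensenBelow (ψ : ℝ → ℝ) (t : ℝ) : Prop :=
  ∀ u w v : ℝ, v < t * u + (1 - t) * w → ψ v ≤ t * ψ u + (1 - t) * ψ w

namespace JensenBelow

variable {ψ : ℝ → ℝ} {s t : ℝ}

lemma one (hψ : Monotone ψ) : JensenBelow ψ 1 := fun u w v hv => by
  simpa using hψ (by linarith : v ≤ u)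

lemma one_sub (h : JensenBelow ψ t) : JensenBelow ψ (1 - t) := fun u w v hv => by
  linarith [h w u v (by linarith)]

lemma mul (ht : JensenBelow ψ t) (hs : JensenBelow ψ s) (ht₀ : 0 < t) :
    JensenBelow ψ (t * s) := by
  intro u w v hv
  set p := s * u + (1 - s) * w
  -- `v` stays strictly below the `t`-combination after moving `p` slightly to the left
  set p' := p - (t * p + (1 - t) * w - v) / (2 * t)
  have hp' : p' < p := by
    have : 0 < (t * p + (1 - t) * w - v) / (2 * t) := by
      apply div_pos _ (by positivity); nlinarith
    linarith
  have hv' : v < t * p' + (1 - t) * w := by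
    have : t * p' = t * p - (t * p + (1 - t) * w - v) / 2 := by
      simp only [p']; field_simp
    nlinarith
  calc ψ v ≤ t * ψ p' + (1 - t) * ψ w := ht _ _ _ hv'
    _ ≤ t * (s * ψ u + (1 - s) * ψ w) + (1 - t) * ψ w := by
        gcongr; exact hs u w p' hp'
    _ = t * s * ψ u + (1 - t * s) * ψ w := by ring

lemma pow (h : JensenBelow ψ t) (ht₀ : 0 < t) (hψ : Monotone ψ) (n : ℕ) :
    JensenBelow ψ (t ^ n) := by
  induction n with
  | zero => simpa using one hψ
  | succ n ih => rw [pow_succ']; exact h.mul ih ht₀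

lemma exists_mem_Ioo_sub (h : JensenBelow ψ t) (ht₀ : 0 < t) (ht₁ : t < 1) (hψ : Monotone ψ)
    {a ε : ℝ} (ha₀ : 0 < a) (ha₁ : a ≤ 1) (hε : 0 < ε) :
    ∃ s, JensenBelow ψ s ∧ s ∈ Ioo (a - ε) a := by
  obtain ⟨k, hk⟩ := exists_pow_lt_of_lt_one (lt_min hε ht₀) ht₁
  set q := t ^ k
  have hq₀ : 0 < q := pow_pos ht₀ k
  have hqε : q < ε := hk.trans_le (min_le_left _ _)
  have hq₁ : q < 1 := (hk.trans_le (min_le_right _ _)).trans ht₁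
  -- the powers of `1 - q` decrease to `0` in steps shorter than `q`
  obtain ⟨n, hn, hn'⟩ :=
    exists_nat_pow_near_of_lt_one ha₀ ha₁ (by linarith) (by linarith : 1 - q < 1)
  refine ⟨(1 - q) ^ (n + 1), (h.pow ht₀ hψ k).one_sub.pow (by linarith) hψ _, ?_, hn⟩
  have : (1 - q) ^ n ≤ 1 := pow_le_one₀ (by linarith) (by linarith)
  have : 0 ≤ (1 - q) ^ n := pow_nonneg (by linarith) n
  rw [pow_succ]
  nlinarith

theorem convexOn (h : JensenBelow ψ t) (ht₀ : 0 < t) (ht₁ : t < 1) (hψ : Monotone ψ) :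
    ConvexOn ℝ univ ψ := by
  refine LinearOrder.convexOn_of_lt convex_univ fun x _ y _ hxy a b ha hb hab => ?_
  simp only [smul_eq_mul]
  obtain rfl : b = 1 - a := by linarith
  have hC : 0 ≤ ψ y - ψ x := sub_nonneg.2 (hψ hxy.le)
  refine _root_.le_of_forall_pos_le_add fun ε hε => ?_
  obtain ⟨s, hs, has, hsa⟩ := h.exists_mem_Ioo_sub ht₀ ht₁ hψ ha (by linarith)
    (div_pos hε (by linarith : 0 < ψ y - ψ x + 1))
  calc ψ (a * x + (1 - a) * y) ≤ s * ψ x + (1 - s) * ψ y :=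
        hs x y _ (by nlinarith)
    _ = a * ψ x + (1 - a) * ψ y + (a - s) * (ψ y - ψ x) := by ring
    _ ≤ a * ψ x + (1 - a) * ψ y + ε := by
        gcongr
        calc (a - s) * (ψ y - ψ x) ≤ ε / (ψ y - ψ x + 1) * (ψ y - ψ x + 1) := by
              gcongr <;> linarith
          _ = ε := div_mul_cancel₀ _ (by linarith)

end JensenBelow

noncomputable def twoStep (a b s m : ℝ) : ℝ → ℝ≥0∞ := fun x =>
  ENNReal.ofReal (if x ∈ Ico 0 s then a else if x ∈ Ico s (s + m) then b else 0)

section twoStep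

variable {a b c d s m p : ℝ}

lemma measurable_twoStep : Measurable (twoStep a b s m) :=
  ENNReal.measurable_ofReal.comp <| Measurable.ite measurableSet_Ico measurable_const <|
    Measurable.ite measurableSet_Ico measurable_const measurable_const

lemma twoStep_rpow (ha : 0 ≤ a) (hb : 0 ≤ b) (hp : 0 < p) (x : ℝ) :
    twoStep a b s m x ^ p = twoStep (a ^ p) (b ^ p) s m x := by
  unfold twoStep
  rw [ENNReal.ofReal_rpow_of_nonneg (by split_ifs <;> first | assumption | exact le_rfl) hp.le]
  split_ifs <;> simp [Real.zero_rpow hp.ne']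

lemma twoStep_mul (ha : 0 ≤ a) (hb : 0 ≤ b) (x : ℝ) :
    twoStep a b s m x * twoStep c d s m x = twoStep (a * c) (b * d) s m x := by
  unfold twoStep
  split_ifs <;> simp [← ENNReal.ofReal_mul, ha, hb]

lemma lintegral_twoStep (ha : 0 ≤ a) (hb : 0 ≤ b) (hs : 0 ≤ s) (hm : 0 ≤ m) :
    ∫⁻ x, twoStep a b s m x = ENNReal.ofReal (a * s + b * m) := by
  have : twoStep a b s m =
      (Ico 0 s).indicator (fun _ => ENNReal.ofReal a) +
        (Ico s (s + m)).indicator (fun _ => ENNReal.ofReal b) := by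
    ext x
    by_cases h₁ : x ∈ Ico 0 s
    · have h₂ : x ∉ Ico s (s + m) := fun h₂ => (not_le.2 h₁.2) h₂.1
      simp [twoStep, h₁, h₂]
    · by_cases h₂ : x ∈ Ico s (s + m) <;> simp [twoStep, h₁, h₂]
  rw [this]
  simp only [Pi.add_apply]
  rw [lintegral_add_left (measurable_const.indicator measurableSet_Ico),
    lintegral_indicator_const measurableSet_Ico, lintegral_indicator_const measurableSet_Ico,
    Real.volume_Ico, Real.volume_Ico, ENNReal.ofReal_add (by positivity) (by positivity),
    ENNReal.ofReal_mul ha, ENNReal.ofReal_mul hb]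
  simp

lemma lintegral_twoStep_rpow (ha : 0 ≤ a) (hb : 0 ≤ b) (hs : 0 ≤ s) (hm : 0 ≤ m) (hp : 0 < p) :
    ∫⁻ x, twoStep a b s m x ^ p = ENNReal.ofReal (a ^ p * s + b ^ p * m) := by
  simp_rw [twoStep_rpow ha hb hp]
  exact lintegral_twoStep (by positivity) (by positivity) hs hm

lemma lintegral_twoStep_rpow_mul (ha : 0 ≤ a) (hb : 0 ≤ b) (hs : 0 ≤ s) (hm : 0 ≤ m)
    (hc : 0 ≤ c) (hd : 0 ≤ d) (hp : 0 < p) :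
    ∫⁻ x, twoStep a b s m x ^ p * twoStep c d s m x =
      ENNReal.ofReal (a ^ p * c * s + b ^ p * d * m) := by
  simp_rw [twoStep_rpow ha hb hp, twoStep_mul (Real.rpow_nonneg ha p) (Real.rpow_nonneg hb p)]
  exact lintegral_twoStep (by positivity) (by positivity) hs hm

lemma isDensity_twoStep {α : ℝ} (hα : 0 < α) (ha : 0 ≤ a) (hb : 0 ≤ b) (hs : 0 ≤ s) (hm : 0 ≤ m)
    (h : a * s + b * m = 1) : IsDensity volume α (twoStep a b s m) := by
  refine ⟨measurable_twoStep, by rw [lintegral_twoStep ha hb hs hm, h, ENNReal.ofReal_one], ?_⟩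
  rw [lintegral_twoStep_rpow ha hb hs hm (by linarith)]
  exact ENNReal.ofReal_lt_top

lemma not_twoStep_ae_eq (ha : 0 ≤ a) (hc : 0 ≤ c) (hac : a ≠ c) (hs : 0 < s) :
    ¬ twoStep a b s m =ᵐ[volume] twoStep c d s m := by
  intro h
  have hsub : Ico 0 s ⊆ {x | twoStep a b s m x ≠ twoStep c d s m x} := fun x hx => by
    simp only [mem_ofPred_eq, twoStep, if_pos hx]
    exact mt (ENNReal.ofReal_eq_ofReal_iff ha hc).1 hac
  have := measure_mono_null hsub h
  simp [Real.volume_Ico] at this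
  linarith

end twoStep

lemma exists_twoStep_pair {α a c K : ℝ} (hα : 0 < α) (hc : 0 ≤ c) (hca : c < a)
    (hK : c ^ (α + 1) < a * K) :
    ∃ f g, IsDensity volume α f ∧ IsDensity volume α g ∧ ¬ f =ᵐ[volume] g ∧
      ∫⁻ x, f x ^ (α + 1) = ENNReal.ofReal (a ^ α) ∧
      ∫⁻ x, f x ^ α * g x = ENNReal.ofReal (a ^ α * c / a) ∧
      ∫⁻ x, g x ^ α * f x = ENNReal.ofReal (c ^ α) ∧
      ∫⁻ x, g x ^ (α + 1) = ENNReal.ofReal K := by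
  have ha : 0 < a := hc.trans_lt hca
  -- `g` has height `c` on `[0, 1/a)`, where `f` lives, and puts its remaining mass `q`
  -- on `[1/a, 1/a + m)` at a height `d` tuned so that `∫ g ^ (α + 1) = K`
  set q := 1 - c / a
  set E := K - c ^ (α + 1) / a
  have hq : 0 < q := by simp only [q, sub_pos, div_lt_one ha, hca]
  have hE : 0 < E := by simp only [E, sub_pos, div_lt_iff₀' ha, hK]
  set d := (E / q) ^ (1 / α)
  have hd : 0 < d := by positivity
  have hdα : d ^ α = E / q := by
    rw [← Real.rpow_mul (by positivity), one_div_mul_cancel hα.ne', Real.rpow_one]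
  set m := q / d
  have hs : 0 ≤ 1 / a := by positivity
  have hm : 0 ≤ m := by positivity
  have hα₁ : 0 < α + 1 := by linarith
  refine ⟨twoStep a 0 (1 / a) m, twoStep c d (1 / a) m,
    isDensity_twoStep hα ha.le le_rfl hs hm (by field_simp; ring),
    isDensity_twoStep hα hc hd.le hs hm (by simp only [m, q]; field_simp; ring),
    not_twoStep_ae_eq ha.le hc hca.ne' (by positivity), ?_, ?_, ?_, ?_⟩
  · rw [lintegral_twoStep_rpow ha.le le_rfl hs hm hα₁, Real.rpow_add_one ha.ne',
      Real.zero_rpow hα₁.ne']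
    congr 1
    field_simp
    ring
  · rw [lintegral_twoStep_rpow_mul ha.le le_rfl hs hm hc hd.le hα, Real.zero_rpow hα.ne']
    congr 1
    field_simp
    ring
  · rw [lintegral_twoStep_rpow_mul hc hd.le hs hm ha.le le_rfl hα]
    congr 1
    field_simp
    ring
  · rw [lintegral_twoStep_rpow hc hd.le hs hm hα₁, Real.rpow_add_one hd.ne', hdα]
    congr 1
    simp only [m, E]
    field_simp
    ring

lemma exists_isDensity_pair_exp {α x₁ x₂ x₃ : ℝ} (hα : 0 < α)
    (h : (α + 1) * x₂ < α * x₁ + x₃) :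
    ∃ f g, IsDensity volume α f ∧ IsDensity volume α g ∧ ¬ f =ᵐ[volume] g ∧
      ∫⁻ x, f x ^ (α + 1) = ENNReal.ofReal (Real.exp x₁) ∧
      ∫⁻ x, f x ^ α * g x = ENNReal.ofReal (Real.exp x₂) ∧
      ∫⁻ x, g x ^ (α + 1) = ENNReal.ofReal (Real.exp x₃) := by
  have exp_rpow (y r : ℝ) : Real.exp y ^ r = Real.exp (y * r) := (Real.exp_mul y r).symm
  rcases lt_or_ge x₂ x₁ with h₂₁ | h₁₂
  · have key : (x₁ / α + x₂ - x₁) * (α + 1) = x₁ / α + ((α + 1) * x₂ - α * x₁) := by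
      field_simp; ring
    obtain ⟨f, g, hf, hg, hfg, h₁, h₂, -, h₃⟩ := exists_twoStep_pair hα (Real.exp_pos _).le
      (Real.exp_lt_exp.2 (by linarith : x₁ / α + x₂ - x₁ < x₁ / α)) (K := Real.exp x₃)
      (by rw [exp_rpow, ← Real.exp_add, Real.exp_lt_exp, key]; linarith)
    refine ⟨f, g, hf, hg, hfg, ?_, ?_, h₃⟩
    · rw [h₁, exp_rpow, div_mul_cancel₀ _ hα.ne']
    · rw [h₂, exp_rpow, div_mul_cancel₀ _ hα.ne', ← Real.exp_add, ← Real.exp_sub]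
      ring_nf
  · -- now `x₂ < x₃`, and the pair is realized with the roles of `f` and `g` exchanged
    have key : x₂ / α * (α + 1) < x₃ / α + x₁ := by
      rw [div_mul_eq_mul_div, div_add' _ _ _ hα.ne', div_lt_div_iff_of_pos_right hα]
      linarith
    obtain ⟨g, f, hg, hf, hgf, h₃, -, h₂, h₁⟩ := exists_twoStep_pair hα (Real.exp_pos _).le
      (Real.exp_lt_exp.2 (div_lt_div_of_pos_right (by nlinarith) hα : x₂ / α < x₃ / α))
      (K := Real.exp x₁) (by rw [exp_rpow, ← Real.exp_add, Real.exp_lt_exp]; exact key)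
    refine ⟨f, g, hf, hg, fun h => hgf h.symm, h₁, ?_, ?_⟩
    · rw [h₂, exp_rpow, div_mul_cancel₀ _ hα.ne']
    · rw [h₃, exp_rpow, div_mul_cancel₀ _ hα.ne']

lemma exists_isDensity_pair_orthogonal {α : ℝ} (hα : 0 < α) (x₁ : ℝ) :
    ∃ f g, IsDensity volume α f ∧ IsDensity volume α g ∧ ¬ f =ᵐ[volume] g ∧
      ∫⁻ x, f x ^ (α + 1) = ENNReal.ofReal (Real.exp x₁) ∧
      ∫⁻ x, f x ^ α * g x = 0 ∧
      ∫⁻ x, g x ^ (α + 1) = ENNReal.ofReal (Real.exp x₁) := by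
  obtain ⟨f, g, hf, hg, hfg, h₁, h₂, -, h₃⟩ := exists_twoStep_pair hα le_rfl
    (Real.exp_pos (x₁ / α)) (K := Real.exp x₁)
    (by rw [Real.zero_rpow (by linarith)]; positivity)
  refine ⟨f, g, hf, hg, hfg, ?_, by simpa using h₂, h₃⟩
  rw [h₁, ← Real.exp_mul, div_mul_cancel₀ _ hα.ne']

lemma EReal.lt_of_pos_sub_mul_add_mul {c x z : ℝ} {Y : EReal} (hc : 0 < c)
    (h : 0 < (x : EReal) - ((1 + c : ℝ) : EReal) * Y + (c : EReal) * z) :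
    Y < ((x + c * z) / (1 + c) : ℝ) := by
  induction Y using EReal.rec with
  | bot => exact EReal.bot_lt_coe _
  | top =>
    rw [EReal.coe_mul_top_of_pos (by linarith : 0 < 1 + c)] at h
    simp at h
  | coe y =>
    rw [EReal.coe_lt_coe_iff, lt_div_iff₀ (by linarith)]
    norm_cast at h
    linarith

lemma EReal.ne_top_and_ne_bot_of_sub_mul_add_mul_eq_zero {c : ℝ} {X : EReal} (hc : 0 < c)
    (h : X - ((1 + c : ℝ) : EReal) * X + (c : EReal) * X = 0) : X ≠ ⊤ ∧ X ≠ ⊥ := by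
  induction X using EReal.rec with
  | bot =>
    rw [EReal.coe_mul_bot_of_pos (by linarith : 0 < 1 + c), EReal.coe_mul_bot_of_pos hc] at h
    simp at h
  | top =>
    rw [EReal.coe_mul_top_of_pos (by linarith : 0 < 1 + c), EReal.coe_mul_top_of_pos hc] at h
    simp at h
  | coe x => exact ⟨EReal.coe_ne_top x, EReal.coe_ne_bot x⟩

lemma EReal.le_mul_add_mul {a b c : EReal} {t : ℝ} (hab : a ≤ b) (hac : a ≤ c) (ht₀ : 0 < t)
    (ht₁ : t < 1) : a ≤ t * b + ((1 - t : ℝ) : EReal) * c := by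
  have hconv : a = t * a + ((1 - t : ℝ) : EReal) * a := by
    induction a using EReal.rec with
    | bot => simp [EReal.coe_mul_bot_of_pos ht₀]
    | top =>
      rw [EReal.coe_mul_top_of_pos ht₀, EReal.coe_mul_top_of_pos (by linarith : (0 : ℝ) < 1 - t),
        EReal.top_add_top]
    | coe a => norm_cast; ring
  calc a = t * a + ((1 - t : ℝ) : EReal) * a := hconv
    _ ≤ t * b + ((1 - t : ℝ) : EReal) * c := by
      gcongr

namespace IsValidDivergence

variable {φ : ℝ≥0∞ → EReal} {α : ℝ}

lemma lt_of_not_ae_eq (hvalid : IsValidDivergence φ α volume) (hα : 0 < α)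
    {f g : ℝ → ℝ≥0∞} (hf : IsDensity volume α f) (hg : IsDensity volume α g)
    (hfg : ¬ f =ᵐ[volume] g) {x z : ℝ} (hx : φ (∫⁻ t, f t ^ (α + 1)) = x)
    (hz : φ (∫⁻ t, g t ^ (α + 1)) = z) :
    φ (∫⁻ t, f t ^ α * g t) < ((α * x + z) / (α + 1) : ℝ) := by
  obtain ⟨hnonneg, hzero⟩ := hvalid f g hf hg
  have hpos : 0 < FDPD φ α volume g f := hnonneg.lt_of_ne fun h => hfg (hzero.1 h.symm)
  rw [FDPD, hx, hz] at hpos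
  have hcoef : (α * x + z) / (α + 1) = (x + 1 / α * z) / (1 + 1 / α) := by field_simp
  rw [hcoef]
  exact EReal.lt_of_pos_sub_mul_add_mul (one_div_pos.2 hα) hpos

lemma phi_exp_ne_top_and_ne_bot (hvalid : IsValidDivergence φ α volume) (hα : 0 < α) (x : ℝ) :
    φ (EReal.exp x) ≠ ⊤ ∧ φ (EReal.exp x) ≠ ⊥ := by
  obtain ⟨f, -, hf, -, -, hf₁, -, -⟩ := exists_isDensity_pair_orthogonal hα x
  have hff : ∫⁻ t, f t ^ α * f t = ∫⁻ t, f t ^ (α + 1) := by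
    simp_rw [ENNReal.rpow_add_of_nonneg _ _ hα.le zero_le_one, ENNReal.rpow_one]
  have h := (hvalid f f hf hf).2.2 Filter.EventuallyEq.rfl
  rw [FDPD, hff, hf₁, ← EReal.exp_coe] at h
  exact EReal.ne_top_and_ne_bot_of_sub_mul_add_mul_eq_zero (one_div_pos.2 hα) h

lemma phi_exp_lt (hvalid : IsValidDivergence φ α volume) (hα : 0 < α) {x₁ x₂ x₃ r₁ r₃ : ℝ}
    (h : (α + 1) * x₂ < α * x₁ + x₃) (h₁ : φ (EReal.exp x₁) = r₁) (h₃ : φ (EReal.exp x₃) = r₃) :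
    φ (EReal.exp x₂) < ((α * r₁ + r₃) / (α + 1) : ℝ) := by
  obtain ⟨f, g, hf, hg, hfg, hf₁, hfg₂, hg₃⟩ := exists_isDensity_pair_exp hα h
  rw [EReal.exp_coe] at h₁ h₃ ⊢
  rw [← hfg₂]
  exact hvalid.lt_of_not_ae_eq hα hf hg hfg (hf₁ ▸ h₁) (hg₃ ▸ h₃)

lemma phi_zero_lt (hvalid : IsValidDivergence φ α volume) (hα : 0 < α) {x r : ℝ}
    (h : φ (EReal.exp x) = r) : φ 0 < r := by
  obtain ⟨f, g, hf, hg, hfg, hf₁, hfg₂, hg₁⟩ := exists_isDensity_pair_orthogonal hα x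
  rw [EReal.exp_coe] at h
  have := hvalid.lt_of_not_ae_eq hα hf hg hfg (hf₁ ▸ h) (hg₁ ▸ h)
  rwa [hfg₂, show (α * r + r) / (α + 1) = r by field_simp] at this

end IsValidDivergence

section ERealExtension

variable {Ψ : EReal → EReal} {ψ : ℝ → ℝ}

lemma strictMonoOn_Iio_top_of_coe (hcoe : ∀ x : ℝ, Ψ x = ψ x) (hψ : StrictMono ψ)
    (hbot : ∀ x : ℝ, Ψ ⊥ < ψ x) : StrictMonoOn Ψ (Iio ⊤) := by
  intro x hx y hy hxy
  induction y using EReal.rec with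
  | bot => exact absurd hxy not_lt_bot
  | top => exact absurd (mem_Iio.1 hy) (lt_irrefl _)
  | coe y =>
    induction x using EReal.rec with
    | bot => exact (hcoe y).symm ▸ hbot y
    | top => exact absurd (mem_Iio.1 hx) (lt_irrefl _)
    | coe x =>
      rw [hcoe, hcoe, EReal.coe_lt_coe_iff]
      exact hψ (EReal.coe_lt_coe_iff.1 hxy)

lemma ERealConvexOn.of_coe (hcoe : ∀ x : ℝ, Ψ x = ψ x) (hψ : ConvexOn ℝ univ ψ)
    (hbot : ∀ x : ℝ, Ψ ⊥ ≤ ψ x) : ERealConvexOn Ψ := by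
  intro x hx y hy t ht₀ ht₁
  have hle (z : EReal) (hz : z < ⊤) : Ψ ⊥ ≤ Ψ z := by
    induction z using EReal.rec with
    | bot => exact le_rfl
    | coe z => exact (hcoe z).symm ▸ hbot z
    | top => exact absurd hz (lt_irrefl _)
  induction x using EReal.rec with
  | top => exact absurd hx (lt_irrefl _)
  | bot =>
    rw [EReal.coe_mul_bot_of_pos ht₀, EReal.bot_add]
    exact EReal.le_mul_add_mul le_rfl (hle y hy) ht₀ ht₁
  | coe x =>
    induction y using EReal.rec with
    | top => exact absurd hy (lt_irrefl _)
    | bot =>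
      rw [EReal.coe_mul_bot_of_pos (by linarith : (0 : ℝ) < 1 - t), EReal.add_bot]
      exact EReal.le_mul_add_mul (hle x hx) le_rfl ht₀ ht₁
    | coe y =>
      have h := hψ.2 (mem_univ x) (mem_univ y) ht₀.le (by linarith : (0 : ℝ) ≤ 1 - t) (by ring)
      simp only [smul_eq_mul] at h
      rw [← EReal.coe_mul, ← EReal.coe_mul, ← EReal.coe_add, hcoe, hcoe, hcoe]
      exact_mod_cast h

end ERealExtension

/-- necessity. If `FDPD_{φ,α}` is a valid divergence on Lebesgue probability
densities (no continuity or smoothness of `φ` assumed), then `ψ(x) = φ(eˣ)` is convex and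
strictly increasing on `[-∞,∞)` and maps `ℝ` into `ℝ`. -/
theorem psi_convex_strictMono_of_valid_divergence
    (α : ℝ) (hα : 0 < α) (φ : ℝ≥0∞ → EReal)
    (hvalid : IsValidDivergence φ α volume) :
    StrictMonoOn (fun x => φ (EReal.exp x)) (Iio (⊤ : EReal)) ∧
      ERealConvexOn (fun x => φ (EReal.exp x)) ∧
      ∀ x : ℝ, φ (EReal.exp (x : EReal)) ≠ ⊤ ∧ φ (EReal.exp (x : EReal)) ≠ ⊥ := by
  have hfinite := hvalid.phi_exp_ne_top_and_ne_bot hα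
  set ψ : ℝ → ℝ := fun x => (φ (EReal.exp x)).toReal
  have hcoe (x : ℝ) : φ (EReal.exp x) = ψ x := (EReal.coe_toReal (hfinite x).1 (hfinite x).2).symm
  have hjensen {u w v : ℝ} (h : (α + 1) * v < α * u + w) : ψ v < (α * ψ u + ψ w) / (α + 1) :=
    EReal.coe_lt_coe_iff.1 (hcoe v ▸ hvalid.phi_exp_lt hα h (hcoe u) (hcoe w))
  have hmono : StrictMono ψ := fun v u h => by
    simpa [show (α * ψ u + ψ u) / (α + 1) = ψ u by field_simp] using
      hjensen (u := u) (w := u) (by nlinarith)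
  have hjensenBelow : JensenBelow ψ (α / (α + 1)) := fun u w v h => by
    have hw : 1 - α / (α + 1) = 1 / (α + 1) := by field_simp; ring
    rw [hw] at h ⊢
    have h' : (α + 1) * v < α * u + w := by
      have := mul_lt_mul_of_pos_left h (by linarith : 0 < α + 1)
      field_simp at this
      linarith
    exact (hjensen h').le.trans_eq (by ring)
  have hconv : ConvexOn ℝ univ ψ := hjensenBelow.convexOn (by positivity)
    ((div_lt_one (by linarith)).2 (by linarith)) hmono.monotone
  have hbot (x : ℝ) : φ (EReal.exp ⊥) < ψ x := by
    rw [EReal.exp_bot]; exact hvalid.phi_zero_lt hα (hcoe x)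
  exact ⟨strictMonoOn_Iio_top_of_coe hcoe hmono hbot,
    ERealConvexOn.of_coe hcoe hconv fun x => (hbot x).le, hfinite⟩
end
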